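/- arXiv:1706.07267 — 3 statements merged into one kernel-verified Lean document; each statement's English description precedes it below -/
import Mathlib

section
/- If Γ is a bipartite (d+1)-colored graph of order 2p, then for every cyclic permutation ε of the colors, the quantity ρ_ε(Γ) := 1 − ½(Σ_{j∈ℤ_{d+1}} g_{ε_jε_{j+1}} + (1−d)p) is a non-negative integer. -/
open Relation

/-- An `n`-colored graph: a regular `n`-valent multigraph with a proper edge-coloring
by `Fin n`, encoded by one fixed-point-free "partner" involution per color. -/
structure CG (n : ℕ) where
  V : Type
  [finV : Fintype V]
  inv : Fin n → V → V
  invol : ∀ i v, inv i (inv i v) = v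
  noFix : ∀ i v, inv i v ≠ v

attribute [instance] CG.finV

namespace CG

variable {n : ℕ}

/-- `a` and `b` are joined by an edge whose color lies in `B`. -/
def step (G : CG n) (B : Set (Fin n)) (a b : G.V) : Prop := ∃ i ∈ B, G.inv i a = b

/-- `g_B`: the number of connected components of the subgraph spanned by the
edges with colors in `B`. -/
noncomputable def g (G : CG n) (B : Set (Fin n)) : ℕ :=
  Nat.card (Quotient (EqvGen.setoid (G.step B)))

def Connected (G : CG n) : Prop := ∀ a b : G.V, EqvGen (G.step Set.univ) a b

def Bipartite (G : CG n) : Prop := ∃ f : G.V → Bool, ∀ i v, f (G.inv i v) = ! f v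

/-- The `B`-residue containing `v` is bipartite. -/
def ResidueBipartite (G : CG n) (B : Set (Fin n)) (v : G.V) : Prop :=
  ∃ f : G.V → Bool, ∀ w, EqvGen (G.step B) v w → ∀ i ∈ B, f (G.inv i w) = ! f w

/-- Half the number of vertices, as a rational. -/
noncomputable def pQ (G : CG n) : ℚ := (Nat.card G.V : ℚ) / 2

/-- The regular genus of `G` with respect to the cyclic permutation `ε`:
`ρ_ε(Γ) = 1 - ½( Σ_j g_{ε_j ε_{j+1}} + (1-d)p )` where `n = d+1`. -/
noncomputable def rho [NeZero n] (G : CG n) (ε : ZMod n ≃ Fin n) : ℚ :=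
  1 - ((∑ j : ZMod n, (G.g {ε j, ε (j + 1)} : ℚ)) + (1 - ((n : ℚ) - 1)) * G.pQ) / 2

/-- The Gurau degree: the sum of `ρ_ε(Γ)` over all cyclic permutations of the colors
up to rotation and inversion; since `ρ_ε` is invariant under rotation and inversion of
`ε`, this is the sum over all `n!` labelings divided by `2n`. -/
noncomputable def omegaG [NeZero n] (G : CG n) : ℚ :=
  (∑ ε : ZMod n ≃ Fin n, G.rho ε) / (2 * n)

instance [NeZero n] : Nonempty (ZMod n ≃ Fin n) :=
  ⟨Fintype.equivOfCardEq (by simp [ZMod.card])⟩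

/-- The regular genus `ρ(Γ) = min_ε ρ_ε(Γ)`. -/
noncomputable def rhoMin [NeZero n] (G : CG n) : ℚ :=
  Finset.univ.inf' Finset.univ_nonempty (fun ε : ZMod n ≃ Fin n => G.rho ε)

/-- The residue (connected component) of the subgraph missing color `i` which
contains `v`, as an `n`-colored graph (colors renamed via `i.succAbove`). -/
noncomputable def hatRes (G : CG (n + 1)) (i : Fin (n + 1)) (v : G.V) : CG n where
  V := {w : G.V // EqvGen (G.step {j | j ≠ i}) v w}
  finV := Fintype.ofFinite _
  inv k w := ⟨G.inv (i.succAbove k) w.1,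
    (w.2.trans _ _ _ (EqvGen.rel _ _ ⟨i.succAbove k, Fin.succAbove_ne i k, rfl⟩))⟩
  invol := fun k w => Subtype.ext (G.invol _ _)
  noFix := fun k w h => G.noFix _ w.1 (congrArg Subtype.val h)

/-- `g_{î}`: the number of residues missing color `i`. -/
noncomputable def gHat (G : CG (n + 1)) (i : Fin (n + 1)) : ℕ := G.g {j | j ≠ i}

/-- `ω_G(Γ_{î})`: the sum of the Gurau degrees of the residues missing color `i`
(each component's degree is counted once: the contribution of each of its
vertices is divided by its cardinality). -/
noncomputable def omegaHat [NeZero n] (G : CG (n + 1)) (i : Fin (n + 1)) : ℚ :=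
  ∑ v : G.V, (G.hatRes i v).omegaG / (Nat.card (G.hatRes i v).V)

/-- `x`,`y` form a dipole of colors `C`: they are joined by edges of all colors in `C`
and lie in different components of the subgraph missing the colors of `C`. -/
def IsDipole (G : CG n) (C : Finset (Fin n)) (x y : G.V) : Prop :=
  (∀ c ∈ C, G.inv c x = y) ∧ ¬ EqvGen (G.step {j | j ∉ (C : Set (Fin n))}) x y

def HasDipole (G : CG n) (r : ℕ) : Prop :=
  ∃ C : Finset (Fin n), C.card = r ∧ ∃ x y, G.IsDipole C x y

/-- `G'` is obtained from `G` by eliminating the dipole `(C, x, y)`: the two vertices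
are deleted and the hanging edges are welded according to their colors. -/
def ElimDipole (G G' : CG n) (C : Finset (Fin n)) (x y : G.V) : Prop :=
  G.IsDipole C x y ∧ (∀ c ∉ C, G.inv c x ≠ y) ∧
  ∃ e : G'.V ≃ {v : G.V // v ≠ x ∧ v ≠ y},
    ∀ i w, (G.inv i (e w : G.V) = x → ((e (G'.inv i w)) : G.V) = G.inv i y) ∧
      (G.inv i (e w : G.V) = y → ((e (G'.inv i w)) : G.V) = G.inv i x) ∧
      (G.inv i (e w : G.V) ≠ x → G.inv i (e w : G.V) ≠ y →
        ((e (G'.inv i w)) : G.V) = G.inv i (e w : G.V))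

/-- Color-preserving isomorphism of colored graphs. -/
def Iso (G G' : CG n) : Prop :=
  ∃ e : G.V ≃ G'.V, ∀ i v, e (G.inv i v) = G'.inv i (e v)

/-- `G` is contracted (relative to a predicate recognizing the graphs that represent
the sphere): for every color `i` either `Γ_{î}` is connected or none of its
components represents a sphere. -/
def Contracted (G : CG (n + 1)) (IsSphereGraph : CG n → Prop) : Prop :=
  ∀ i : Fin (n + 1), G.gHat i = 1 ∨ ∀ v, ¬ IsSphereGraph (G.hatRes i v)

noncomputable def resSetoid (G : CG (n + 1)) (i : Fin (n + 1)) : Setoid G.V :=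
  EqvGen.setoid (G.step {j | j ≠ i})

/-- The number of singular residues missing color `i`. -/
noncomputable def singCount (G : CG (n + 1)) (IsSphereGraph : CG n → Prop)
    (i : Fin (n + 1)) : ℕ :=
  Nat.card {x : Quotient (G.resSetoid i) // ¬ IsSphereGraph (G.hatRes i x.out)}

/-- Color `i` is singular: some residue missing color `i` is not a sphere. -/
def SingColor (G : CG (n + 1)) (IsSphereGraph : CG n → Prop) (i : Fin (n + 1)) : Prop :=
  ∃ v, ¬ IsSphereGraph (G.hatRes i v)

end CG

/-!
Colour the vertices of `Γ` black and white. For two colours `i`, `j`, following a `j`-edge and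
then an `i`-edge permutes the `p` black vertices, and the cycles of this permutation are exactly
the `{i, j}`-coloured cycles of `Γ`. Along the cyclic order `ε` these `d + 1` permutations
multiply to the identity, and since `Γ` is connected they generate a transitive group. The
Riemann–Hurwitz formula for such a constellation gives `Σ_j (p - g_{ε_j ε_{j+1}}) = 2p - 2 + 2γ`
with `γ ≥ 0`, and this rearranges to `ρ_ε(Γ) = γ`.

Riemann–Hurwitz itself: factor each permutation into `p - g` transpositions and compare, along
the concatenated factorisation, the number of cycles with the number of components of the graph
of the transpositions used so far; the sign of the identity makes the total length even.
-/

namespace Setoid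

variable {X : Type*} {s t : Setoid X} {a b : X}

def glue (s : Setoid X) (a b : X) : Setoid X where
  r x y := s x y ∨ s x a ∧ s b y ∨ s x b ∧ s a y
  iseqv := by
    refine ⟨fun x => Or.inl (s.refl x), ?_, ?_⟩
    · rintro x y (h | ⟨h₁, h₂⟩ | ⟨h₁, h₂⟩)
      exacts [Or.inl (s.symm h), Or.inr (Or.inr ⟨s.symm h₂, s.symm h₁⟩),
        Or.inr (Or.inl ⟨s.symm h₂, s.symm h₁⟩)]
    · rintro x y z (h | ⟨h₁, h₂⟩ | ⟨h₁, h₂⟩) (g | ⟨g₁, g₂⟩ | ⟨g₁, g₂⟩)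
      exacts [Or.inl (s.trans h g), Or.inr (Or.inl ⟨s.trans h g₁, g₂⟩),
        Or.inr (Or.inr ⟨s.trans h g₁, g₂⟩), Or.inr (Or.inl ⟨h₁, s.trans h₂ g⟩),
        Or.inl (s.trans (s.trans h₁ (s.symm (s.trans h₂ g₁))) g₂), Or.inl (s.trans h₁ g₂),
        Or.inr (Or.inr ⟨h₁, s.trans h₂ g⟩), Or.inl (s.trans h₁ g₂),
        Or.inl (s.trans (s.trans h₁ (s.symm (s.trans h₂ g₁))) g₂)]

theorem le_glue : s ≤ s.glue a b := fun _ _ => Or.inl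

theorem glue_rel : s.glue a b a b := Or.inr (Or.inl ⟨s.refl a, s.refl b⟩)

theorem glue_le (hst : s ≤ t) (hab : t a b) : s.glue a b ≤ t := by
  rintro x y (h | ⟨h₁, h₂⟩ | ⟨h₁, h₂⟩)
  exacts [hst h, t.trans (t.trans (hst h₁) hab) (hst h₂),
    t.trans (t.trans (hst h₁) (t.symm hab)) (hst h₂)]

theorem glue_eq_self (hab : s a b) : s.glue a b = s :=
  le_antisymm (glue_le le_rfl hab) le_glue

variable [Finite X]

theorem card_quotient_le_of_le (hst : s ≤ t) : Nat.card (Quotient t) ≤ Nat.card (Quotient s) :=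
  Nat.card_le_card_of_surjective (map_of_le hst) (Quotient.ind fun x => ⟨⟦x⟧, rfl⟩)

theorem card_quotient_glue_add_one (hab : ¬ s a b) :
    Nat.card (Quotient (s.glue a b)) + 1 = Nat.card (Quotient s) := by
  classical
  -- Gluing merges the class of `b` into that of `a` and leaves the other classes alone.
  let e : {q : Quotient s // q ≠ ⟦b⟧} → Quotient (s.glue a b) := fun q => map_of_le le_glue q.1
  have he : Function.Bijective e := by
    constructor
    · rintro ⟨⟨x⟩, hx⟩ ⟨⟨y⟩, hy⟩ h
      have hxb : ¬ s x b := fun h => hx (Quotient.sound h)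
      have hyb : ¬ s y b := fun h => hy (Quotient.sound h)
      rcases Quotient.exact h with h | ⟨-, h⟩ | ⟨h, -⟩
      exacts [Subtype.ext (Quotient.sound h), absurd (s.symm h) hyb, absurd h hxb]
    · rintro ⟨x⟩
      by_cases hxb : s x b
      · refine ⟨⟨⟦a⟧, fun h => hab (Quotient.exact h)⟩, Quotient.sound ?_⟩
        exact Or.inr (Or.inl ⟨s.refl a, s.symm hxb⟩)
      · exact ⟨⟨⟦x⟧, fun h => hxb (Quotient.exact h)⟩, rfl⟩
  rw [← Nat.card_congr (Equiv.ofBijective e he), ← Finite.card_option,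
    Nat.card_congr (Equiv.optionSubtypeNe _)]

theorem card_quotient_le_glue_add_one :
    Nat.card (Quotient s) ≤ Nat.card (Quotient (s.glue a b)) + 1 := by
  by_cases hab : s a b
  · rw [glue_eq_self hab]; omega
  · rw [card_quotient_glue_add_one hab]

end Setoid

namespace Equiv.Perm

variable {X : Type*}

noncomputable def numCycles (σ : Perm X) : ℕ := Nat.card (Quotient (SameCycle.setoid σ))

theorem sameCycle_setoid_le {σ : Perm X} {t : Setoid X} (h : ∀ x, t x (σ x)) :
    SameCycle.setoid σ ≤ t := by
  rintro x _ ⟨i, rfl⟩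
  induction i using Int.induction_on with
  | zero => exact t.refl x
  | succ i ih => exact t.trans ih (by rw [add_comm, zpow_one_add, mul_apply]; exact h _)
  | pred i ih =>
    have hi := h ((σ ^ (-(i : ℤ) - 1)) x)
    rw [← mul_apply, ← zpow_one_add, add_sub_cancel] at hi
    exact t.trans ih (t.symm hi)

theorem sameCycle_setoid_one : SameCycle.setoid (1 : Perm X) = ⊥ := by
  ext x y
  exact sameCycle_one

theorem numCycles_one : numCycles (1 : Perm X) = Nat.card X := by
  rw [numCycles, sameCycle_setoid_one, Nat.card_congr Setoid.quotientBotEquiv]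

def componentSetoid (L : List (X × X)) : Setoid X := EqvGen.setoid fun x y => (x, y) ∈ L

theorem componentSetoid_nil : componentSetoid ([] : List (X × X)) = ⊥ :=
  le_bot_iff.1 (Setoid.eqvGen_le (by simp))

theorem componentSetoid_cons (a b : X) (L : List (X × X)) :
    componentSetoid ((a, b) :: L) = (componentSetoid L).glue a b := by
  refine le_antisymm (Setoid.eqvGen_le ?_) (Setoid.glue_le ?_ (EqvGen.rel _ _ (by simp)))
  · rintro x y (⟨⟩ | ⟨_, h⟩)
    exacts [Setoid.glue_rel, Setoid.le_glue (EqvGen.rel _ _ h)]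
  · exact Setoid.eqvGen_mono fun x y h => List.mem_cons_of_mem _ h

theorem componentSetoid_mono {L L' : List (X × X)} (h : L ⊆ L') :
    componentSetoid L ≤ componentSetoid L' :=
  Setoid.eqvGen_mono fun _ _ hxy => h hxy

section

variable [DecidableEq X]

theorem sameCycle_setoid_swap_mul_le_glue (σ : Perm X) (a b : X) :
    SameCycle.setoid (swap a b * σ) ≤ (SameCycle.setoid σ).glue a b := by
  refine sameCycle_setoid_le fun x => ?_
  have hx : SameCycle σ x (σ x) := ⟨1, rfl⟩
  rw [mul_apply, swap_apply_def]
  split_ifs with ha hb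
  · exact Or.inr (Or.inl ⟨ha ▸ hx, SameCycle.refl σ b⟩)
  · exact Or.inr (Or.inr ⟨hb ▸ hx, SameCycle.refl σ a⟩)
  · exact Or.inl hx

theorem sameCycle_swap_mul_of_not_sameCycle [Finite X] {σ : Perm X} {a b : X}
    (h : ¬ SameCycle σ a b) :
    SameCycle (swap a b * σ) a b := by
  -- Away from the preimage of `a`, `swap a b * σ` follows the `σ`-cycle of `a`,
  -- which avoids `b`; at that preimage it jumps to `b`.
  have hstep : ∀ k : ℕ, SameCycle (swap a b * σ) a ((σ ^ k) a) := by
    intro k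
    induction k with
    | zero => exact SameCycle.refl _ a
    | succ k ih =>
      rw [pow_succ', mul_apply]
      by_cases ha : σ ((σ ^ k) a) = a
      · rw [ha]
      · have hb : σ ((σ ^ k) a) ≠ b := fun hb =>
          h ⟨(k + 1 : ℕ), by rw [zpow_natCast, pow_succ', mul_apply, hb]⟩
        refine ih.trans ⟨1, ?_⟩
        rw [zpow_one, mul_apply, swap_apply_of_ne_of_ne ha hb]
  obtain ⟨k, hk⟩ := SameCycle.exists_nat_pow_eq (f := σ) (x := a) ⟨-1, by simp⟩ (y := σ⁻¹ a)
  refine (hstep k).trans ⟨1, ?_⟩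
  simp [hk]

theorem numCycles_swap_mul_le [Finite X] (σ : Perm X) (a b : X) :
    numCycles (swap a b * σ) ≤ numCycles σ + 1 := by
  have hle := sameCycle_setoid_swap_mul_le_glue (swap a b * σ) a b
  rw [swap_mul_self_mul] at hle
  exact (Setoid.card_quotient_le_glue_add_one).trans
    (Nat.add_le_add_right (Setoid.card_quotient_le_of_le hle) 1)

theorem numCycles_swap_mul_add_one [Finite X] {σ : Perm X} {a b : X}
    (h : ¬ SameCycle σ a b) :
    numCycles (swap a b * σ) + 1 = numCycles σ := by
  have hab := sameCycle_swap_mul_of_not_sameCycle h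
  have hle := sameCycle_setoid_swap_mul_le_glue (swap a b * σ) a b
  rw [swap_mul_self_mul, Setoid.glue_eq_self hab] at hle
  have heq : SameCycle.setoid (swap a b * σ) = (SameCycle.setoid σ).glue a b :=
    le_antisymm (sameCycle_setoid_swap_mul_le_glue σ a b) (Setoid.glue_le hle hab)
  rw [numCycles, heq, Setoid.card_quotient_glue_add_one h]
  rfl

def swapProd (L : List (X × X)) : Perm X := (L.map fun e => swap e.1 e.2).prod

@[simp]
theorem swapProd_nil : swapProd ([] : List (X × X)) = 1 := rfl

@[simp]
theorem swapProd_cons (a b : X) (L : List (X × X)) :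
    swapProd ((a, b) :: L) = swap a b * swapProd L := rfl

theorem swapProd_flatten (Ls : List (List (X × X))) :
    swapProd Ls.flatten = (Ls.map swapProd).prod := by
  simp only [swapProd, List.map_flatten, List.prod_flatten, List.map_map]
  rfl

theorem even_length_of_swapProd_eq_one [Fintype X] {L : List (X × X)}
    (hL : ∀ e ∈ L, e.1 ≠ e.2) (h : swapProd L = 1) : Even L.length := by
  have hsign := sign_prod_list_swap (l := L.map fun e => swap e.1 e.2) (by
    simp only [List.mem_map]
    rintro _ ⟨e, he, rfl⟩
    exact ⟨e.1, e.2, hL e he, rfl⟩)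
  rw [← swapProd, h, map_one, List.length_map] at hsign
  exact (neg_one_pow_eq_one_iff_even (by decide)).1 hsign.symm

theorem sameCycle_setoid_swapProd_le (L : List (X × X)) :
    SameCycle.setoid (swapProd L) ≤ componentSetoid L := by
  induction L with
  | nil => rw [swapProd_nil, sameCycle_setoid_one, componentSetoid_nil]
  | cons e L ih =>
    obtain ⟨a, b⟩ := e
    rw [swapProd_cons, componentSetoid_cons]
    exact (sameCycle_setoid_swap_mul_le_glue _ _ _).trans
      (Setoid.glue_le (ih.trans Setoid.le_glue) Setoid.glue_rel)

-- A transposition joining two components of the graph `L` merges two cycles; any other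
-- transposition creates at most one new cycle.
theorem numCycles_swapProd_add_card_le [Finite X] (L : List (X × X)) :
    numCycles (swapProd L) + Nat.card X ≤
      2 * Nat.card (Quotient (componentSetoid L)) + L.length := by
  induction L with
  | nil =>
    rw [swapProd_nil, numCycles_one, componentSetoid_nil, Nat.card_congr Setoid.quotientBotEquiv]
    omega
  | cons e L ih =>
    obtain ⟨a, b⟩ := e
    rw [swapProd_cons, componentSetoid_cons, List.length_cons]
    by_cases hab : componentSetoid L a b
    · have := numCycles_swap_mul_le (swapProd L) a b
      rw [Setoid.glue_eq_self hab]
      omega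
    · have h₁ := numCycles_swap_mul_add_one fun h => hab (sameCycle_setoid_swapProd_le L h)
      have h₂ := Setoid.card_quotient_glue_add_one hab
      omega

theorem exists_swapProd_eq [Fintype X] (σ : Perm X) :
    ∃ L : List (X × X), (∀ e ∈ L, e.1 ≠ e.2) ∧ swapProd L = σ ∧
      L.length + numCycles σ = Nat.card X := by
  by_cases hσ : σ = 1
  · exact ⟨[], by simp, by simp [hσ], by simp [hσ, numCycles_one]⟩
  obtain ⟨a, ha⟩ : ∃ a, σ a ≠ a := by
    contrapose! hσ
    exact Equiv.ext hσ
  -- `swap a (σ a) * σ` fixes `a`, so it has one cycle more than `σ`.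
  obtain ⟨L, hL_ne, hL_prod, hL_len⟩ := exists_swapProd_eq (swap a (σ a) * σ)
  have hfix : ¬ SameCycle (swap a (σ a) * σ) a (σ a) := fun h =>
    ha (h.eq_of_left (by simp [Function.IsFixedPt])).symm
  have hcycles := numCycles_swap_mul_add_one hfix
  rw [swap_mul_self_mul] at hcycles
  refine ⟨(a, σ a) :: L, ?_, by simp [hL_prod], by simp only [List.length_cons]; omega⟩
  rintro e (_ | ⟨_, he⟩)
  exacts [ha.symm, hL_ne e he]
termination_by σ.support.card
decreasing_by exact card_support_swap_mul ha

end

theorem card_quotient_le_one_of_isPretransitive [Finite X] {S : Set (Perm X)}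
    [MulAction.IsPretransitive (Subgroup.closure S) X] {t : Setoid X}
    (h : ∀ σ ∈ S, ∀ x, t x (σ x)) : Nat.card (Quotient t) ≤ 1 := by
  have horbit : ∀ g ∈ Subgroup.closure S, ∀ x, t x (g x) := by
    intro g hg
    induction hg using Subgroup.closure_induction with
    | mem σ hσ => exact h σ hσ
    | one => exact fun x => t.refl x
    | mul g g' _ _ hg hg' => exact fun x => t.trans (hg' x) (hg (g' x))
    | inv g _ hg => exact fun x => t.symm (by simpa using hg (g⁻¹ x))
  refine Finite.card_le_one_iff_subsingleton.2 ⟨?_⟩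
  rintro ⟨x⟩ ⟨y⟩
  obtain ⟨g, rfl⟩ := MulAction.exists_smul_eq (Subgroup.closure S) x y
  exact Quotient.sound (horbit g g.2 x)

-- Riemann–Hurwitz for a transitive constellation: `γ` is the genus of the associated surface.
theorem exists_sum_numCycles_eq_of_prod_eq_one [Finite X] (l : List (Perm X))
    (hl : l.prod = 1) [MulAction.IsPretransitive (Subgroup.closure {σ | σ ∈ l}) X] :
    ∃ γ : ℕ, (l.map numCycles).sum + 2 * (Nat.card X + γ) = l.length * Nat.card X + 2 := by
  classical
  have := Fintype.ofFinite X
  choose L hL_ne hL_prod hL_len using exists_swapProd_eq (X := X)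
  set M := (l.map L).flatten with hM
  have hM_prod : swapProd M = 1 := by
    rw [hM, swapProd_flatten, List.map_map]
    simpa [Function.comp_def, hL_prod] using hl
  have hM_len : M.length + (l.map numCycles).sum = l.length * Nat.card X := by
    rw [hM, List.length_flatten, List.map_map, ← List.sum_map_add]
    simp [hL_len]
  have hM_ne : ∀ e ∈ M, e.1 ≠ e.2 := by
    simp only [hM, List.mem_flatten, List.mem_map]
    rintro e ⟨_, ⟨σ, -, rfl⟩, he⟩
    exact hL_ne σ e he
  have hM_conn : Nat.card (Quotient (componentSetoid M)) ≤ 1 := by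
    refine card_quotient_le_one_of_isPretransitive (S := {σ | σ ∈ l}) fun σ hσ x => ?_
    refine componentSetoid_mono (fun e he => ?_) (sameCycle_setoid_swapProd_le (L σ) ?_)
    · exact List.mem_flatten.2 ⟨L σ, List.mem_map_of_mem hσ, he⟩
    · rw [hL_prod]
      exact ⟨1, rfl⟩
  obtain ⟨m, hm⟩ := even_length_of_swapProd_eq_one hM_ne hM_prod
  have hbound := numCycles_swapProd_add_card_le M
  rw [hM_prod, numCycles_one] at hbound
  exact ⟨m + 1 - Nat.card X, by omega⟩

end Equiv.Perm

theorem ZMod.sum_range_natCast {M : Type*} [AddCommMonoid M] (n : ℕ) [NeZero n]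
    (F : ZMod n → M) : ∑ k ∈ Finset.range n, F k = ∑ j, F j := by
  refine Finset.sum_nbij (fun k : ℕ => (k : ZMod n)) (by simp) ?_ ?_ (by simp)
  · intro a ha b hb h
    simpa [ZMod.natCast_eq_natCast_iff', Nat.mod_eq_of_lt (Finset.mem_range.1 ha),
      Nat.mod_eq_of_lt (Finset.mem_range.1 hb)] using h
  · intro j _
    exact ⟨j.val, by simp [ZMod.val_lt]⟩

namespace CG

open Equiv Perm

variable {n : ℕ} (G : CG n) {f : G.V → Bool} (hf : ∀ i v, f (G.inv i v) = !f v)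

def bicolorPerm (i j : Fin n) : Perm {v : G.V // f v = true} where
  toFun x := ⟨G.inv i (G.inv j x), by simp [hf, x.2]⟩
  invFun x := ⟨G.inv j (G.inv i x), by simp [hf, x.2]⟩
  left_inv x := by simp [G.invol]
  right_inv x := by simp [G.invol]

@[simp]
theorem coe_bicolorPerm_apply (i j : Fin n) (x : {v : G.V // f v = true}) :
    (G.bicolorPerm hf i j x : G.V) = G.inv i (G.inv j x) := rfl

theorem bicolorPerm_mul_bicolorPerm (i j k : Fin n) :
    G.bicolorPerm hf i j * G.bicolorPerm hf j k = G.bicolorPerm hf i k := by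
  ext x
  simp [G.invol]

theorem bicolorPerm_self (i : Fin n) : G.bicolorPerm hf i i = 1 := by
  ext x
  simp [G.invol]

def toBlack (c : Fin n) (v : G.V) : {v : G.V // f v = true} :=
  if h : f v then ⟨v, h⟩ else ⟨G.inv c v, by simp [hf, h]⟩

theorem toBlack_of_true {c : Fin n} {v : G.V} (h : f v = true) :
    (G.toBlack hf c v : G.V) = v := by
  simp [toBlack, h]

theorem toBlack_of_false {c : Fin n} {v : G.V} (h : f v = false) :
    (G.toBlack hf c v : G.V) = G.inv c v := by
  simp [toBlack, h]

@[simp]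
theorem toBlack_coe (c : Fin n) (x : {v : G.V // f v = true}) : G.toBlack hf c x = x :=
  Subtype.ext (G.toBlack_of_true hf x.2)

theorem g_pair_eq_numCycles_bicolorPerm (i j : Fin n) :
    G.g {i, j} = (G.bicolorPerm hf i j).numCycles := by
  set π := G.bicolorPerm hf i j
  have hstep : ∀ v w, G.step {i, j} v w →
      SameCycle π (G.toBlack hf i v) (G.toBlack hf i w) := by
    rintro v _ ⟨c, hc, rfl⟩
    have key : G.toBlack hf i (G.inv c v) = G.toBlack hf i v ∨
        G.toBlack hf i (G.inv c v) = π (G.toBlack hf i v) ∨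
        π (G.toBlack hf i (G.inv c v)) = G.toBlack hf i v := by
      rcases hc with rfl | rfl <;> cases hv : f v <;>
        simp [π, Subtype.ext_iff, toBlack_of_true, toBlack_of_false, hf, hv, G.invol]
    rcases key with h | h | h
    · rw [h]
    · rw [h]
      exact sameCycle_apply_right.2 (SameCycle.refl _ _)
    · rw [← h]
      exact sameCycle_apply_left.2 (SameCycle.refl _ _)
  have hval : SameCycle.setoid π ≤ (EqvGen.setoid (G.step {i, j})).comap Subtype.val :=
    sameCycle_setoid_le fun x =>
      EqvGen.trans _ _ _ (EqvGen.rel _ _ ⟨j, by simp, rfl⟩) (EqvGen.rel _ _ ⟨i, by simp, rfl⟩)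
  refine (Nat.card_eq_of_bijective (Quotient.map' Subtype.val hval) ⟨?_, ?_⟩).symm
  · rintro ⟨x⟩ ⟨y⟩ h
    have := Setoid.eqvGen_le (s := (SameCycle.setoid π).comap (G.toBlack hf i)) hstep
      (Quotient.exact h)
    rw [Setoid.comap_rel, toBlack_coe, toBlack_coe] at this
    exact Quotient.sound this
  · rintro ⟨v⟩
    refine ⟨⟦G.toBlack hf i v⟧, Quotient.sound ?_⟩
    cases hv : f v
    · rw [G.toBlack_of_false hf hv]
      exact EqvGen.symm _ _ (EqvGen.rel _ _ ⟨i, by simp, rfl⟩)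
    · rw [G.toBlack_of_true hf hv]

theorem card_eq_two_mul_card_black [NeZero n] (hf : ∀ i v, f (G.inv i v) = !f v) :
    Nat.card G.V = 2 * Nat.card {v : G.V // f v = true} := by
  have hwhite : {v : G.V // ¬ f v = true} ≃ {v : G.V // f v = true} :=
    { toFun v := ⟨G.inv 0 v, by simpa [hf] using v.2⟩
      invFun v := ⟨G.inv 0 v, by simp [hf, v.2]⟩
      left_inv v := Subtype.ext (G.invol _ _)
      right_inv v := Subtype.ext (G.invol _ _) }
  rw [← Nat.card_congr (Equiv.sumCompl fun v => f v = true), Nat.card_sum,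
    Nat.card_congr hwhite, two_mul]

theorem prod_map_range_bicolorPerm (c : ℕ → Fin n) (m : ℕ) :
    ((List.range m).map fun k => G.bicolorPerm hf (c k) (c (k + 1))).prod =
      G.bicolorPerm hf (c 0) (c m) := by
  induction m with
  | zero => simp [bicolorPerm_self]
  | succ m ih => simp [List.range_succ, ih, bicolorPerm_mul_bicolorPerm]

theorem bicolorPerm_mem_of_forall_mem_succ [NeZero n] (ε : ZMod n ≃ Fin n)
    {H : Subgroup (Perm {v : G.V // f v = true})}
    (hH : ∀ j, G.bicolorPerm hf (ε j) (ε (j + 1)) ∈ H) (i i' : Fin n) :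
    G.bicolorPerm hf i i' ∈ H := by
  have hmem : ∀ (j : ZMod n) (m : ℕ), G.bicolorPerm hf (ε j) (ε (j + m)) ∈ H := by
    intro j m
    induction m with
    | zero => simp [bicolorPerm_self, H.one_mem]
    | succ m ih =>
      rw [Nat.cast_succ, ← add_assoc, ← G.bicolorPerm_mul_bicolorPerm hf _ (ε (j + m))]
      exact H.mul_mem ih (hH _)
  simpa using hmem (ε.symm i) (ε.symm i' - ε.symm i).val

theorem isPretransitive_of_bicolorPerm_mem [NeZero n] (hG : G.Connected)
    {H : Subgroup (Perm {v : G.V // f v = true})} (hH : ∀ i j, G.bicolorPerm hf i j ∈ H) :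
    MulAction.IsPretransitive H {v : G.V // f v = true} := by
  have hstep : ∀ v w, G.step Set.univ v w →
      MulAction.orbitRel H _ (G.toBlack hf 0 v) (G.toBlack hf 0 w) := by
    rintro v _ ⟨c, -, rfl⟩
    cases hv : f v
    · refine ⟨⟨_, hH 0 c⟩, Subtype.ext ?_⟩
      simp [toBlack_of_false, toBlack_of_true, hf, hv, G.invol]
    · refine ⟨⟨_, hH c 0⟩, Subtype.ext ?_⟩
      simp [toBlack_of_false, toBlack_of_true, hf, hv, G.invol]
  refine ⟨fun x y => ?_⟩
  have := Setoid.eqvGen_le (s := (MulAction.orbitRel H _).comap (G.toBlack hf 0)) hstep (hG y x)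
  rw [Setoid.comap_rel, toBlack_coe, toBlack_coe, MulAction.orbitRel_apply] at this
  exact MulAction.mem_orbit_iff.1 this

end CG

/-- for a bipartite `(d+1)`-colored graph, `ρ_ε(Γ)` is a non-negative integer
for every cyclic permutation `ε` of the colors. -/
theorem rho_nonneg_integer_of_bipartite {d : ℕ} (G : CG (d + 1)) (hG : G.Connected)
    (p : ℕ) (hp : Nat.card G.V = 2 * p) (hbip : G.Bipartite)
    (ε : ZMod (d + 1) ≃ Fin (d + 1)) :
    ∃ k : ℕ, G.rho ε = (k : ℚ) := by
  obtain ⟨f, hf⟩ := hbip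
  set l := (List.range (d + 1)).map fun k : ℕ => G.bicolorPerm hf (ε k) (ε (k + 1))
  have hl_prod : l.prod = 1 := by
    simpa [CG.bicolorPerm_self] using G.prod_map_range_bicolorPerm hf (fun k => ε k) (d + 1)
  have hl_trans : MulAction.IsPretransitive (Subgroup.closure {σ | σ ∈ l}) _ :=
    G.isPretransitive_of_bicolorPerm_mem hf hG <| G.bicolorPerm_mem_of_forall_mem_succ hf ε fun j =>
      Subgroup.subset_closure (List.mem_map.2 ⟨j.val, List.mem_range.2 j.val_lt, by simp⟩)
  obtain ⟨γ, hγ⟩ := Equiv.Perm.exists_sum_numCycles_eq_of_prod_eq_one l hl_prod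
  have hsum : (l.map Equiv.Perm.numCycles).sum = ∑ j : ZMod (d + 1), G.g {ε j, ε (j + 1)} := by
    rw [← ZMod.sum_range_natCast, ← List.toFinset_range, List.sum_toFinset _ List.nodup_range,
      List.map_map]
    simp [Function.comp_def, G.g_pair_eq_numCycles_bicolorPerm hf]
  have hcard : Nat.card {v // f v = true} = p := by
    have := G.card_eq_two_mul_card_black hf
    omega
  have hlen : l.length = d + 1 := by simp [l]
  rw [hsum, hcard, hlen] at hγ
  refine ⟨γ, ?_⟩
  have hγ' : ∑ j : ZMod (d + 1), (G.g {ε j, ε (j + 1)} : ℚ) + 2 * (p + γ) =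
      (d + 1) * p + 2 := by exact_mod_cast hγ
  rw [CG.rho, CG.pQ, hp]
  push_cast
  linear_combination (-1 / 2 : ℚ) * hγ'
end

section
/- Let Γ be a (d+1)-colored graph and Γ′ the (d+1)-colored graph obtained from Γ by eliminating an r-dipole (1 ≤ r ≤ d). Then ω_G(Γ) = (d−1)!/2 · (r−1)(d−r) + ω_G(Γ′). In particular, eliminating an r-dipole never increases the Gurau degree, and eliminating a 1-dipole or a d-dipole leaves it unchanged. -/
open Relation

/-!
For every pair of colours `{u, v}` the elimination lowers `g_{uv}` by one if `u` and `v` lie on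
the same side of `C` and leaves it unchanged otherwise. If both lie in `C`, the vertices `x, y`
form a `{u, v}`-cycle of length two, which disappears. If exactly one does, the `{u, v}`-cycle
through `x` and `y` merely loses them. If neither does, the dipole condition puts `x` and `y` on
two different `{u, v}`-cycles, and the welding merges them into one. Hence `ρ_ε` changes by an
amount counting the adjacent colours of `ε` on the same side of `C`. Summing over all labellings,
each ordered pair of distinct colours sits at a given pair of adjacent positions in `(d - 1)!`
of them, and the arithmetic gives `(d - 1)!/2 · (r - 1)(d - r)`.
-/

namespace Relation

variable {α β : Type*} {r : α → α → Prop} {t : β → β → Prop}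

def addEdge (r : α → α → Prop) (x y : α) (a b : α) : Prop := r a b ∨ a = x ∧ b = y

namespace EqvGen

theorem map (f : α → β) (hf : ∀ a b, r a b → EqvGen t (f a) (f b)) {a b : α}
    (h : EqvGen r a b) : EqvGen t (f a) (f b) := by
  induction h with
  | rel a b hab => exact hf a b hab
  | refl a => exact EqvGen.refl _
  | symm a b _ ih => exact ih.symm
  | trans a b c _ _ ih₁ ih₂ => exact ih₁.trans _ _ _ ih₂

theorem iff_of_forall_rel {p : α → Prop} (hp : ∀ a b, r a b → (p a ↔ p b)) {a b : α}
    (h : EqvGen r a b) : p a ↔ p b := by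
  induction h with
  | rel a b hab => exact hp a b hab
  | refl a => exact Iff.rfl
  | symm a b _ ih => exact ih.symm
  | trans a b c _ _ ih₁ ih₂ => exact ih₁.trans ih₂

def quotientCongr (f : α → β) (g : β → α) (hf : ∀ a b, r a b → EqvGen t (f a) (f b))
    (hg : ∀ a b, t a b → EqvGen r (g a) (g b)) (hgf : ∀ a, EqvGen r (g (f a)) a)
    (hfg : ∀ b, EqvGen t (f (g b)) b) :
    Quotient (EqvGen.setoid r) ≃ Quotient (EqvGen.setoid t) where
  toFun := Quotient.map f fun _ _ => map f hf
  invFun := Quotient.map g fun _ _ => map g hg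
  left_inv := Quotient.ind fun a => Quotient.sound (hgf a)
  right_inv := Quotient.ind fun b => Quotient.sound (hfg b)

theorem card_quotient_eq_add_one [Finite α] (g : β → α) (x : α)
    (hg : ∀ b b', t b b' → EqvGen r (g b) (g b'))
    (hg_inj : ∀ b b', EqvGen r (g b) (g b') → EqvGen t b b')
    (hg_surj : ∀ a, ¬ EqvGen r a x → ∃ b, EqvGen r (g b) a)
    (hgx : ∀ b, ¬ EqvGen r (g b) x) :
    Nat.card (Quotient (EqvGen.setoid r)) = Nat.card (Quotient (EqvGen.setoid t)) + 1 := by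
  classical
  let x' : Quotient (EqvGen.setoid r) := Quotient.mk _ x
  let ĝ : Quotient (EqvGen.setoid t) → {q // q ≠ x'} := fun q =>
    ⟨Quotient.map g (fun _ _ => map g hg) q,
      Quotient.inductionOn q fun b hb => hgx b (Quotient.exact hb)⟩
  have hĝ : Function.Bijective ĝ := by
    refine ⟨fun q q' hqq' => ?_, fun ⟨q, hq⟩ => ?_⟩
    · induction q, q' using Quotient.inductionOn₂ with
      | h b b' => exact Quotient.sound (hg_inj b b' (Quotient.exact (congrArg Subtype.val hqq')))
    · induction q using Quotient.inductionOn with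
      | h a =>
        obtain ⟨b, hb⟩ := hg_surj a fun hax => hq (Quotient.sound hax)
        exact ⟨Quotient.mk _ b, Subtype.ext (Quotient.sound hb)⟩
  rw [Nat.card_eq_of_bijective ĝ hĝ, ← Finite.card_option,
    Nat.card_congr (Equiv.optionSubtypeNe x').symm]

theorem addEdge_iff_of_eqvGen {x y : α} (hxy : EqvGen r x y) {a b : α} :
    EqvGen (addEdge r x y) a b ↔ EqvGen r a b := by
  refine ⟨map id ?_, fun h => EqvGen.mono (fun _ _ => Or.inl) _ _ h⟩
  rintro a b (h | ⟨rfl, rfl⟩)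
  exacts [EqvGen.rel _ _ h, hxy]

theorem card_quotient_addEdge_of_eqvGen {x y : α} (hxy : EqvGen r x y) :
    Nat.card (Quotient (EqvGen.setoid (addEdge r x y))) =
      Nat.card (Quotient (EqvGen.setoid r)) := by
  rw [show EqvGen.setoid (addEdge r x y) = EqvGen.setoid r from
    Setoid.ext fun _ _ => addEdge_iff_of_eqvGen hxy]

theorem card_quotient_eq_card_addEdge_add_one [Finite α] {x y : α} (hxy : ¬ EqvGen r x y) :
    Nat.card (Quotient (EqvGen.setoid r)) =
      Nat.card (Quotient (EqvGen.setoid (addEdge r x y))) + 1 := by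
  classical
  have hyx : ¬ EqvGen r y x := fun h => hxy h.symm
  have hr : ∀ a b, r a b → EqvGen (addEdge r x y) a b := fun a b h => EqvGen.rel _ _ (Or.inl h)
  let g : α → α := fun b => if EqvGen r b x then y else b
  have hg_eqv : ∀ b, EqvGen (addEdge r x y) (g b) b := fun b => by
    by_cases hb : EqvGen r b x
    · simp only [g, if_pos hb]
      exact (EqvGen.rel _ _ (Or.inr ⟨rfl, rfl⟩) : EqvGen (addEdge r x y) x y).symm.trans _ _ _
        (map id hr hb).symm
    · simp only [g, if_neg hb]; exact EqvGen.refl _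
  refine card_quotient_eq_add_one g x ?_ ?_ ?_ ?_
  · rintro b b' (h | ⟨rfl, rfl⟩)
    · by_cases hb : EqvGen r b x
      · simp only [g, if_pos hb, if_pos ((EqvGen.rel _ _ h).symm.trans _ _ _ hb)]
        exact EqvGen.refl _
      · simp only [g, if_neg hb, if_neg fun hb' => hb ((EqvGen.rel _ _ h).trans _ _ _ hb')]
        exact EqvGen.rel _ _ h
    · simp only [g, if_pos (EqvGen.refl _), if_neg hyx]
      exact EqvGen.refl _
  · intro b b' h
    exact ((hg_eqv b).symm.trans _ _ _ (map id hr h)).trans _ _ _ (hg_eqv b')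
  · intro a ha
    exact ⟨a, by simp only [g, if_neg ha]; exact EqvGen.refl _⟩
  · intro b
    by_cases hb : EqvGen r b x
    · simpa only [g, if_pos hb] using hyx
    · simpa only [g, if_neg hb] using hb

end EqvGen

end Relation

section AlternatingWalk

open Function

variable {A : Type*} {i₁ i₂ : A → A}

def altStep (i₁ i₂ : A → A) (p : A × Bool) : A × Bool := (cond p.2 (i₂ p.1) (i₁ p.1), !p.2)

def flipFlag (p : A × Bool) : A × Bool := (p.1, !p.2)

theorem altStep_flipFlag_altStep (h₁ : Involutive i₁) (h₂ : Involutive i₂) (p : A × Bool) :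
    altStep i₁ i₂ (flipFlag (altStep i₁ i₂ p)) = flipFlag p := by
  rcases p with ⟨a, _ | _⟩ <;> simp [altStep, flipFlag, h₁ a, h₂ a]

theorem altStep_injective (h₁ : Involutive i₁) (h₂ : Involutive i₂) :
    Injective (altStep i₁ i₂) := fun p q hpq => by
  have := altStep_flipFlag_altStep h₁ h₂ p
  rw [hpq, altStep_flipFlag_altStep h₁ h₂ q] at this
  simpa [flipFlag, Prod.ext_iff] using this.symm

theorem altStep_iterate_flipFlag_iterate (h₁ : Involutive i₁) (h₂ : Involutive i₂)
    (k : ℕ) (p : A × Bool) :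
    (altStep i₁ i₂)^[k] (flipFlag ((altStep i₁ i₂)^[k] p)) = flipFlag p := by
  induction k with
  | zero => rfl
  | succ k ih =>
    rw [iterate_succ_apply, iterate_succ_apply', altStep_flipFlag_altStep h₁ h₂, ih]

/-- The alternating walk is a palindrome, so it could only reach the reversed start by turning
around at a fixed point of `i₁` or `i₂`. -/
theorem altStep_iterate_ne_flipFlag (h₁ : Involutive i₁) (h₂ : Involutive i₂)
    (hn₁ : ∀ a, i₁ a ≠ a) (hn₂ : ∀ a, i₂ a ≠ a) (k : ℕ) (p : A × Bool) :
    (altStep i₁ i₂)^[k] p ≠ flipFlag p := by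
  intro hk
  have hinj := (altStep_injective h₁ h₂).iterate
  rcases Nat.even_or_odd' k with ⟨m, rfl | rfl⟩
  · rw [two_mul, iterate_add_apply, ← altStep_iterate_flipFlag_iterate h₁ h₂ m p] at hk
    have := congrArg Prod.snd (hinj m hk)
    simp [flipFlag] at this
  · rw [two_mul, add_assoc, iterate_add_apply, iterate_succ_apply',
      ← altStep_iterate_flipFlag_iterate h₁ h₂ m p] at hk
    have := congrArg Prod.fst (hinj m hk)
    rcases hq : ((altStep i₁ i₂)^[m] p).2 <;> simp [altStep, flipFlag, hq, hn₁, hn₂] at this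

theorem altStep_fst (p : A × Bool) :
    EqvGen (fun a b => i₁ a = b ∨ i₂ a = b) p.1 (altStep i₁ i₂ p).1 := by
  rcases p with ⟨a, _ | _⟩
  exacts [EqvGen.rel _ _ (Or.inl rfl), EqvGen.rel _ _ (Or.inr rfl)]

/-- The component of `x` is an alternating cycle, so deleting `x` leaves a path from `i₁ x`
to `i₂ x`. -/
theorem eqvGen_avoiding_of_involutive [Finite A] (h₁ : Involutive i₁) (h₂ : Involutive i₂)
    (hn₁ : ∀ a, i₁ a ≠ a) (hn₂ : ∀ a, i₂ a ≠ a) {S : Set A} {x : A}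
    (hS : ∀ s ∈ S, EqvGen (fun a b => i₁ a = b ∨ i₂ a = b) x s → s = x) :
    EqvGen (fun a b => (i₁ a = b ∨ i₂ a = b) ∧ a ∉ S ∧ b ∉ S) (i₁ x) (i₂ x) := by
  set F := altStep i₁ i₂
  set p₀ : A × Bool := (x, false)
  set N := minimalPeriod F p₀
  have hN : F^[N] p₀ = p₀ := iterate_minimalPeriod
  have hlast : F^[N - 1] p₀ = (i₂ x, true) := by
    have hpos : 0 < N :=
      minimalPeriod_pos_of_mem_periodicPts ((altStep_injective h₁ h₂).mem_periodicPts p₀)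
    apply altStep_injective h₁ h₂
    change F (F^[N - 1] p₀) = F (i₂ x, true)
    rw [← iterate_succ_apply' F, Nat.succ_eq_add_one, Nat.sub_one_add_one hpos.ne', hN]
    simp [F, altStep, p₀, h₂ x]
  have hN1 : 1 < N := by
    by_contra! hN1
    rw [show N - 1 = 0 by omega] at hlast
    simp [p₀] at hlast
  have hconn : ∀ k, EqvGen (fun a b => i₁ a = b ∨ i₂ a = b) x (F^[k] p₀).1 := by
    intro k
    induction k with
    | zero => exact EqvGen.refl _
    | succ k ih => exact ih.trans _ _ _ (by rw [iterate_succ_apply']; exact altStep_fst _)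
  have havoid : ∀ k, 0 < k → k < N → (F^[k] p₀).1 ∉ S := by
    intro k hk0 hkN hS'
    have hx := hS _ hS' (hconn k)
    rcases hb : (F^[k] p₀).2
    · exact not_isPeriodicPt_of_pos_of_lt_minimalPeriod (n := k) hk0.ne' hkN
        (Prod.ext hx hb)
    · exact altStep_iterate_ne_flipFlag h₁ h₂ hn₁ hn₂ k p₀ (Prod.ext hx (by rw [hb]; rfl))
  have hwalk : ∀ k, 1 ≤ k → k < N →
      EqvGen (fun a b => (i₁ a = b ∨ i₂ a = b) ∧ a ∉ S ∧ b ∉ S) (i₁ x) (F^[k] p₀).1 := by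
    intro k hk
    induction k, hk using Nat.le_induction with
    | base => intro; exact EqvGen.refl _
    | succ k hk ih =>
      intro hkN
      refine (ih (by omega)).trans _ _ _ (EqvGen.rel _ _ ⟨?_, havoid k (by omega) (by omega),
        havoid (k + 1) (by omega) hkN⟩)
      rw [iterate_succ_apply']
      rcases (F^[k] p₀) with ⟨a, _ | _⟩
      exacts [Or.inl rfl, Or.inr rfl]
  simpa [hlast] using hwalk (N - 1) (by omega) (by omega)

end AlternatingWalk

section EquivCount

open Finset Nat

variable {α β : Type*} [DecidableEq α] [DecidableEq β]

def Equiv.subtypeApplyEqEquiv (a : α) (b : β) :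
    {ε : α ≃ β // ε a = b} ≃ ({x // x ≠ a} ≃ {y // y ≠ b}) :=
  (Equiv.subtypeEquiv (Equiv.equivCongr (Equiv.optionSubtypeNe a).symm (Equiv.refl β))
    fun ε => by simp).trans (Equiv.optionSubtype b)

@[simp]
theorem Equiv.coe_subtypeApplyEqEquiv_apply (a : α) (b : β) (ε : {ε : α ≃ β // ε a = b})
    (x : {x // x ≠ a}) : (Equiv.subtypeApplyEqEquiv a b ε x : β) = ε.1 x := by
  simp [Equiv.subtypeApplyEqEquiv, Equiv.optionSubtype]

variable [Fintype α] [Fintype β]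

theorem Fintype.card_subtype_ne (a : α) : Fintype.card {x // x ≠ a} = Fintype.card α - 1 := by
  simp

theorem Fintype.card_equiv_apply_eq (a : α) (b : β) (hcard : Fintype.card α = Fintype.card β) :
    Fintype.card {ε : α ≃ β // ε a = b} = (Fintype.card α - 1)! := by
  rw [Fintype.card_congr (Equiv.subtypeApplyEqEquiv a b), Fintype.card_equiv
    (Fintype.equivOfCardEq (by rw [Fintype.card_subtype_ne, Fintype.card_subtype_ne, hcard])),
    Fintype.card_subtype_ne]

theorem Fintype.card_equiv_apply_eq_apply_eq {a a' : α} {b b' : β} (ha : a' ≠ a) (hb : b' ≠ b)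
    (hcard : Fintype.card α = Fintype.card β) :
    Fintype.card {ε : α ≃ β // ε a = b ∧ ε a' = b'} = (Fintype.card α - 2)! := by
  let e : {ε : α ≃ β // ε a = b ∧ ε a' = b'} ≃
      {ε : {x // x ≠ a} ≃ {y // y ≠ b} // ε ⟨a', ha⟩ = ⟨b', hb⟩} :=
    (Equiv.subtypeSubtypeEquivSubtypeInter _ _).symm.trans
      (Equiv.subtypeEquiv (Equiv.subtypeApplyEqEquiv a b) fun ε => by simp [Subtype.ext_iff])
  rw [Fintype.card_congr e, Fintype.card_equiv_apply_eq _ _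
    (by rw [Fintype.card_subtype_ne, Fintype.card_subtype_ne, hcard]), Fintype.card_subtype_ne]
  rfl

/-- Each pair of distinct values is taken at `(a, a')` by `(card α - 2)!` bijections. -/
theorem Fintype.sum_equiv_apply_apply {M : Type*} [AddCommMonoid M] (f : β → β → M)
    {a a' : α} (ha : a ≠ a') (hcard : Fintype.card α = Fintype.card β) :
    ∑ ε : α ≃ β, f (ε a) (ε a') = (Fintype.card α - 2)! • ∑ p ∈ univ.offDiag, f p.1 p.2 := by
  rw [← Finset.sum_fiberwise_of_maps_to (g := fun ε : α ≃ β => (ε a, ε a')) (t := univ.offDiag)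
    (by simpa using fun ε : α ≃ β => ε.injective.ne ha), Finset.smul_sum]
  refine Finset.sum_congr rfl fun p hp => ?_
  obtain ⟨-, -, hp⟩ := Finset.mem_offDiag.mp hp
  have hcount : #{ε : α ≃ β | (ε a, ε a') = p} = (Fintype.card α - 2)! := by
    rw [← Fintype.card_equiv_apply_eq_apply_eq ha.symm (Ne.symm hp) hcard, Fintype.card_subtype]
    simp only [Prod.ext_iff]
  rw [Finset.sum_congr rfl fun ε hε => show f (ε a) (ε a') = f p.1 p.2 by
    rw [← (Finset.mem_filter.mp hε).2], Finset.sum_const, hcount]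

theorem Finset.card_filter_offDiag_mem_iff_mem (C : Finset β) :
    #{p ∈ (univ : Finset β).offDiag | p.1 ∈ C ↔ p.2 ∈ C} = #C.offDiag + #Cᶜ.offDiag := by
  rw [← card_union_of_disjoint]
  · congr 1
    ext p
    by_cases h₁ : p.1 ∈ C <;> by_cases h₂ : p.2 ∈ C <;> simp [h₁, h₂]
  · rw [disjoint_left]
    intro p h₁ h₂
    exact (mem_compl.mp (mem_offDiag.mp h₂).1) (mem_offDiag.mp h₁).1

end EquivCount

namespace CG

variable {n : ℕ} {G G' : CG n} {C : Finset (Fin n)} {x y : G.V}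

theorem step_pair_iff {u v : Fin n} {a b : G.V} :
    G.step {u, v} a b ↔ G.inv u a = b ∨ G.inv v a = b := by
  simp [step]

def avoidStep (G : CG n) (B : Set (Fin n)) (x y a b : G.V) : Prop :=
  G.step B a b ∧ (a ≠ x ∧ a ≠ y) ∧ (b ≠ x ∧ b ≠ y)

namespace ElimDipole

variable {c i : Fin n} {a : G.V}

theorem inv_left_of_mem (h : G.ElimDipole G' C x y) (hc : c ∈ C) : G.inv c x = y :=
  h.1.1 c hc

theorem inv_right_of_mem (h : G.ElimDipole G' C x y) (hc : c ∈ C) : G.inv c y = x := by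
  rw [← h.inv_left_of_mem hc, G.invol]

theorem inv_eq_left_iff (h : G.ElimDipole G' C x y) (hc : c ∈ C) : G.inv c a = x ↔ a = y :=
  ⟨fun ha => by rw [← G.invol c a, ha, h.inv_left_of_mem hc], by
    rintro rfl; exact h.inv_right_of_mem hc⟩

theorem inv_eq_right_iff (h : G.ElimDipole G' C x y) (hc : c ∈ C) : G.inv c a = y ↔ a = x :=
  ⟨fun ha => by rw [← G.invol c a, ha, h.inv_right_of_mem hc], by
    rintro rfl; exact h.inv_left_of_mem hc⟩

theorem left_ne_right (h : G.ElimDipole G' C x y) : x ≠ y := by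
  rintro rfl
  exact h.1.2 (EqvGen.refl _)

theorem not_eqvGen (h : G.ElimDipole G' C x y) {B : Set (Fin n)} (hB : ∀ i ∈ B, i ∉ C) :
    ¬ EqvGen (G.step B) x y := fun hxy =>
  h.1.2 (EqvGen.mono (fun _ _ ⟨i, hi, hab⟩ => ⟨i, hB i hi, hab⟩) _ _ hxy)

theorem inv_ne_of_notMem (h : G.ElimDipole G' C x y) (hc : c ∉ C) (ha : a = x ∨ a = y) :
    G.inv c a ≠ x ∧ G.inv c a ≠ y := by
  rcases ha with rfl | rfl
  · exact ⟨G.noFix c a, h.2.1 c hc⟩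
  · exact ⟨fun hax => h.2.1 c hc (by rw [← hax, G.invol]), G.noFix c a⟩

noncomputable def equiv (h : G.ElimDipole G' C x y) : G'.V ≃ {v : G.V // v ≠ x ∧ v ≠ y} :=
  h.2.2.choose

theorem coe_equiv_inv (h : G.ElimDipole G' C x y) {w : G'.V}
    (hw : G.inv i (h.equiv w) ≠ x ∧ G.inv i (h.equiv w) ≠ y) :
    (h.equiv (G'.inv i w) : G.V) = G.inv i (h.equiv w) :=
  (h.2.2.choose_spec i w).2.2 hw.1 hw.2

theorem coe_equiv_inv_of_eq_left (h : G.ElimDipole G' C x y) {w : G'.V}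
    (hw : G.inv i (h.equiv w) = x) : (h.equiv (G'.inv i w) : G.V) = G.inv i y :=
  (h.2.2.choose_spec i w).1 hw

theorem coe_equiv_inv_of_eq_right (h : G.ElimDipole G' C x y) {w : G'.V}
    (hw : G.inv i (h.equiv w) = y) : (h.equiv (G'.inv i w) : G.V) = G.inv i x :=
  (h.2.2.choose_spec i w).2.1 hw

theorem inv_equiv_symm (h : G.ElimDipole G' C x y) {v : {v : G.V // v ≠ x ∧ v ≠ y}}
    (hv : G.inv i v ≠ x ∧ G.inv i v ≠ y) :
    G'.inv i (h.equiv.symm v) = h.equiv.symm ⟨G.inv i v, hv⟩ := by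
  apply h.equiv.injective
  ext
  rw [Equiv.apply_symm_apply, h.coe_equiv_inv (by simpa using hv), Equiv.apply_symm_apply]

theorem card_eq (h : G.ElimDipole G' C x y) : Nat.card G.V = Nat.card G'.V + 2 := by
  classical
  rw [Nat.card_congr h.equiv, Nat.card_eq_fintype_card, Nat.card_eq_fintype_card,
    Fintype.card_subtype, ← Finset.card_compl_add_card {x, y}, Finset.card_pair h.left_ne_right]
  congr 2
  ext v
  simp

theorem g_eq_add_one_of_subset (h : G.ElimDipole G' C x y) {B : Set (Fin n)}
    (hB : ∀ i ∈ B, i ∈ C) {u : Fin n} (hu : u ∈ B) : G.g B = G'.g B + 1 := by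
  have hclosed : ∀ a b, G.step B a b → ((a = x ∨ a = y) ↔ (b = x ∨ b = y)) := by
    rintro a _ ⟨i, hi, rfl⟩
    rw [h.inv_eq_left_iff (hB i hi), h.inv_eq_right_iff (hB i hi), or_comm]
  have hyx : EqvGen (G.step B) y x := EqvGen.rel _ _ ⟨u, hu, h.inv_right_of_mem (hB u hu)⟩
  refine EqvGen.card_quotient_eq_add_one (fun w => (h.equiv w : G.V)) x ?_ ?_ ?_ ?_
  · rintro w _ ⟨i, hi, rfl⟩
    refine EqvGen.rel _ _ ⟨i, hi, (h.coe_equiv_inv ?_).symm⟩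
    rw [Ne, Ne, h.inv_eq_left_iff (hB i hi), h.inv_eq_right_iff (hB i hi)]
    exact (h.equiv w).2.symm
  · intro w w' hww'
    classical
    -- any value will do at `x` and `y`, which form a component of their own
    let f : G.V → G'.V := fun v => if hv : v ≠ x ∧ v ≠ y then h.equiv.symm ⟨v, hv⟩ else w
    have hfw : ∀ w₀ : G'.V, f (h.equiv w₀) = w₀ := fun w₀ => by
      simp only [f, dif_pos (h.equiv w₀).2, Subtype.coe_eta, Equiv.symm_apply_apply]
    suffices hf : ∀ a b, G.step B a b → EqvGen (G'.step B) (f a) (f b) by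
      simpa only [hfw] using EqvGen.map f hf hww'
    rintro a _ ⟨i, hi, rfl⟩
    have hia := (hclosed a _ ⟨i, hi, rfl⟩).not
    simp only [not_or] at hia
    by_cases ha : a ≠ x ∧ a ≠ y
    · simp only [f, dif_pos ha, dif_pos (hia.mp ha)]
      exact EqvGen.rel _ _ ⟨i, hi, h.inv_equiv_symm (hia.mp ha)⟩
    · simp only [f, dif_neg ha, dif_neg (hia.not.mp ha)]
      exact EqvGen.refl _
  · intro a ha
    have hax : a ≠ x := by rintro rfl; exact ha (EqvGen.refl _)
    have hay : a ≠ y := by rintro rfl; exact ha hyx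
    exact ⟨h.equiv.symm ⟨a, hax, hay⟩, by simpa using EqvGen.refl _⟩
  · intro w hw
    rcases (EqvGen.iff_of_forall_rel hclosed hw).mpr (Or.inl rfl) with hx | hy
    exacts [(h.equiv w).2.1 hx, (h.equiv w).2.2 hy]

open Classical in
noncomputable def proj (h : G.ElimDipole G' C x y) (hc : c ∉ C) (v : G.V) : G'.V :=
  if hv : v ≠ x ∧ v ≠ y then h.equiv.symm ⟨v, hv⟩
  else h.equiv.symm ⟨G.inv c v, h.inv_ne_of_notMem hc (by tauto)⟩

theorem proj_of_ne (h : G.ElimDipole G' C x y) (hc : c ∉ C) (ha : a ≠ x ∧ a ≠ y) :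
    h.proj hc a = h.equiv.symm ⟨a, ha⟩ :=
  dif_pos ha

theorem proj_of_eq (h : G.ElimDipole G' C x y) (hc : c ∉ C) (ha : a = x ∨ a = y) :
    h.proj hc a = h.equiv.symm ⟨G.inv c a, h.inv_ne_of_notMem hc ha⟩ :=
  dif_neg (by tauto)

@[simp]
theorem proj_equiv (h : G.ElimDipole G' C x y) (hc : c ∉ C) (w : G'.V) :
    h.proj hc (h.equiv w) = w := by
  simp [h.proj_of_ne hc (h.equiv w).2]

theorem proj_inv_self (h : G.ElimDipole G' C x y) (hc : c ∉ C) (ha : a = x ∨ a = y) :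
    h.proj hc (G.inv c a) = h.proj hc a := by
  rw [h.proj_of_ne hc (h.inv_ne_of_notMem hc ha), h.proj_of_eq hc ha]

theorem inv_proj (h : G.ElimDipole G' C x y) (hc : c ∉ C) (ha : a ≠ x ∧ a ≠ y)
    (hia : G.inv i a ≠ x ∧ G.inv i a ≠ y) :
    G'.inv i (h.proj hc a) = h.proj hc (G.inv i a) := by
  rw [h.proj_of_ne hc ha, h.proj_of_ne hc hia, h.inv_equiv_symm]

theorem inv_proj_left (h : G.ElimDipole G' C x y) (hc : c ∉ C) :
    G'.inv c (h.proj hc x) = h.proj hc y := by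
  rw [h.proj_of_eq hc (Or.inl rfl), h.proj_of_eq hc (Or.inr rfl)]
  apply h.equiv.injective
  ext
  rw [h.coe_equiv_inv_of_eq_left (by simp [G.invol]), Equiv.apply_symm_apply]

section Welding

variable {B : Set (Fin n)} (h : G.ElimDipole G' C x y) (hc : c ∉ C)

theorem eqvGen_proj_of_avoidStep {a b : G.V} (hab : EqvGen (G.avoidStep B x y) a b) :
    EqvGen (G'.step B) (h.proj hc a) (h.proj hc b) := by
  refine EqvGen.map _ (fun _ _ ⟨⟨i, hi, hab⟩, ha, hb⟩ => EqvGen.rel _ _ ⟨i, hi, ?_⟩) hab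
  subst hab
  exact h.inv_proj hc ha hb

theorem eqvGen_proj_inv (hcB : c ∈ B) (ha : a = x ∨ a = y)
    (hpath : i ∉ C → EqvGen (G.avoidStep B x y) (G.inv c a) (G.inv i a)) :
    EqvGen (G'.step B) (h.proj hc a) (h.proj hc (G.inv i a)) := by
  by_cases hiC : i ∈ C
  · have hweld : EqvGen (G'.step B) (h.proj hc x) (h.proj hc y) :=
      EqvGen.rel _ _ ⟨c, hcB, h.inv_proj_left hc⟩
    rcases ha with rfl | rfl
    · rw [h.inv_left_of_mem hiC]; exact hweld
    · rw [h.inv_right_of_mem hiC]; exact hweld.symm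
  · rw [← h.proj_inv_self hc ha]
    exact h.eqvGen_proj_of_avoidStep hc (hpath hiC)

theorem eqvGen_proj_of_addEdge (hcB : c ∈ B)
    (hpath : ∀ i ∈ B, i ∉ C → ∀ a, a = x ∨ a = y →
      EqvGen (G.avoidStep B x y) (G.inv c a) (G.inv i a))
    {a b : G.V} (hab : addEdge (G.step B) x y a b) :
    EqvGen (G'.step B) (h.proj hc a) (h.proj hc b) := by
  rcases hab with ⟨i, hi, rfl⟩ | ⟨rfl, rfl⟩
  · by_cases ha : a = x ∨ a = y
    · exact h.eqvGen_proj_inv hc hcB ha (hpath i hi · a ha)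
    by_cases hia : G.inv i a = x ∨ G.inv i a = y
    · simpa only [G.invol] using
        (h.eqvGen_proj_inv hc hcB hia (hpath i hi · _ hia)).symm
    exact EqvGen.rel _ _ ⟨i, hi, h.inv_proj hc (not_or.mp ha) (not_or.mp hia)⟩
  · exact EqvGen.rel _ _ ⟨c, hcB, h.inv_proj_left hc⟩

theorem eqvGen_addEdge_of_step {w w' : G'.V} (hw : G'.step B w w') :
    EqvGen (addEdge (G.step B) x y) (h.equiv w) (h.equiv w') := by
  obtain ⟨i, hi, rfl⟩ := hw
  have hedge : ∀ a, EqvGen (addEdge (G.step B) x y) a (G.inv i a) := fun a =>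
    EqvGen.rel _ _ (Or.inl ⟨i, hi, rfl⟩)
  have hxy : EqvGen (addEdge (G.step B) x y) x y := EqvGen.rel _ _ (Or.inr ⟨rfl, rfl⟩)
  by_cases hx : G.inv i (h.equiv w) = x
  · rw [h.coe_equiv_inv_of_eq_left hx]
    exact ((hx ▸ hedge _).trans _ _ _ hxy).trans _ _ _ (hedge y)
  by_cases hy : G.inv i (h.equiv w) = y
  · rw [h.coe_equiv_inv_of_eq_right hy]
    exact ((hy ▸ hedge _).trans _ _ _ hxy.symm).trans _ _ _ (hedge x)
  rw [h.coe_equiv_inv ⟨hx, hy⟩]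
  exact hedge _

end Welding

theorem g_eq_card_addEdge {B : Set (Fin n)} (h : G.ElimDipole G' C x y) (hcB : c ∈ B)
    (hc : c ∉ C) (hpath : ∀ i ∈ B, i ∉ C → ∀ a, a = x ∨ a = y →
      EqvGen (G.avoidStep B x y) (G.inv c a) (G.inv i a)) :
    G'.g B = Nat.card (Quotient (EqvGen.setoid (addEdge (G.step B) x y))) := by
  refine Nat.card_congr (EqvGen.quotientCongr (fun w => (h.equiv w : G.V)) (h.proj hc)
    (fun _ _ => h.eqvGen_addEdge_of_step) (fun _ _ => h.eqvGen_proj_of_addEdge hc hcB hpath)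
    (fun w => by rw [h.proj_equiv]; exact EqvGen.refl _) fun a => ?_)
  by_cases ha : a = x ∨ a = y
  · rw [h.proj_of_eq hc ha, Equiv.apply_symm_apply]
    exact EqvGen.symm _ _ (EqvGen.rel _ _ (Or.inl ⟨c, hcB, rfl⟩))
  · rw [h.proj_of_ne hc (not_or.mp ha), Equiv.apply_symm_apply]
    exact EqvGen.refl _

theorem g_pair_eq_of_notMem_of_mem (h : G.ElimDipole G' C x y) {u v : Fin n} (hu : u ∉ C)
    (hv : v ∈ C) : G.g {u, v} = G'.g {u, v} := by
  rw [h.g_eq_card_addEdge (Or.inl rfl) hu ?_, EqvGen.card_quotient_addEdge_of_eqvGen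
    (EqvGen.rel _ _ ⟨v, Or.inr rfl, h.inv_left_of_mem hv⟩)]
  · rfl
  rintro i (rfl | rfl) hi a -
  exacts [EqvGen.refl _, absurd hv hi]

/-- Here `x` and `y` lie on different `{u, v}`-cycles, which the welding merges. -/
theorem g_pair_eq_of_notMem_of_notMem (h : G.ElimDipole G' C x y) {u v : Fin n} (hu : u ∉ C)
    (hv : v ∉ C) : G.g {u, v} = G'.g {u, v} + 1 := by
  have hB : ∀ i ∈ ({u, v} : Set (Fin n)), i ∉ C := by rintro i (rfl | rfl) <;> assumption
  rw [h.g_eq_card_addEdge (Or.inl rfl) hu ?_]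
  · exact EqvGen.card_quotient_eq_card_addEdge_add_one (h.not_eqvGen hB)
  rintro i (rfl | rfl) - a ha
  · exact EqvGen.refl _
  refine EqvGen.mono (fun b b' ⟨hbb', hb, hb'⟩ => ⟨step_pair_iff.mpr hbb', not_or.mp hb,
    not_or.mp hb'⟩) _ _ (eqvGen_avoiding_of_involutive (G.invol u) (G.invol i) (G.noFix u)
      (G.noFix i) (S := {b | b = x ∨ b = y}) fun b hb hab => ?_)
  have hab' : EqvGen (G.step {u, i}) a b :=
    EqvGen.mono (fun _ _ hr => step_pair_iff.mpr hr) _ _ hab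
  rcases ha with rfl | rfl <;> rcases hb with rfl | rfl
  exacts [rfl, absurd hab' (h.not_eqvGen hB), absurd hab'.symm (h.not_eqvGen hB), rfl]

theorem g_pair_eq (h : G.ElimDipole G' C x y) (u v : Fin n) :
    G.g {u, v} = G'.g {u, v} + if (u ∈ C ↔ v ∈ C) then 1 else 0 := by
  by_cases hu : u ∈ C <;> by_cases hv : v ∈ C <;> simp only [hu, hv, iff_true, iff_false,
    not_true_eq_false, if_true, if_false, add_zero]
  · exact h.g_eq_add_one_of_subset (by rintro i (rfl | rfl) <;> assumption) (Or.inl rfl)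
  · rw [Set.pair_comm]; exact h.g_pair_eq_of_notMem_of_mem hv hu
  · exact h.g_pair_eq_of_notMem_of_mem hu hv
  · exact h.g_pair_eq_of_notMem_of_notMem hu hv

theorem pQ_eq (h : G.ElimDipole G' C x y) : G.pQ = G'.pQ + 1 := by
  rw [pQ, pQ, h.card_eq]
  push_cast
  ring

theorem rho_eq [NeZero n] (h : G.ElimDipole G' C x y) (ε : ZMod n ≃ Fin n) :
    G.rho ε = G'.rho ε +
      ((n : ℚ) - 2 - ∑ j, if (ε j ∈ C ↔ ε (j + 1) ∈ C) then 1 else 0) / 2 := by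
  simp only [rho, h.g_pair_eq, h.pQ_eq, Nat.cast_add, Finset.sum_add_distrib]
  push_cast
  ring

end ElimDipole

end CG

open Finset Nat in
theorem sum_equiv_sum_ite_mem_iff_mem {k : ℕ} (C : Finset (Fin (k + 2))) :
    ∑ ε : ZMod (k + 2) ≃ Fin (k + 2), ∑ j, (if (ε j ∈ C ↔ ε (j + 1) ∈ C) then 1 else 0 : ℚ) =
      (k + 2) * k ! * (#C * (#C - 1) + (k + 2 - #C) * (k + 1 - #C)) := by
  have : Fact (1 < k + 2) := ⟨by omega⟩
  have hoff : ∀ s : Finset (Fin (k + 2)), (#s.offDiag : ℚ) = #s * (#s - 1) := fun s => by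
    rw [offDiag_card, Nat.cast_sub (Nat.le_mul_self _)]
    push_cast
    ring
  have hsame : ∑ p ∈ (univ : Finset (Fin (k + 2))).offDiag,
      (if (p.1 ∈ C ↔ p.2 ∈ C) then 1 else 0 : ℚ) =
        #C * (#C - 1) + (k + 2 - #C) * (k + 1 - #C) := by
    rw [sum_boole, Finset.card_filter_offDiag_mem_iff_mem, Nat.cast_add, hoff, hoff, card_compl,
      Nat.cast_sub (card_le_univ C), Fintype.card_fin]
    push_cast
    ring
  rw [sum_comm, sum_congr rfl fun (j : ZMod (k + 2)) _ => Fintype.sum_equiv_apply_apply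
    (fun u v => if (u ∈ C ↔ v ∈ C) then (1 : ℚ) else 0) (by simp : j ≠ j + 1)
    (by simp [ZMod.card]), hsame, sum_const, Finset.card_univ, ZMod.card, nsmul_eq_mul,
    nsmul_eq_mul]
  push_cast
  ring

open Finset Nat in
theorem CG.ElimDipole.omegaG_eq {k : ℕ} {G G' : CG (k + 2)} {C : Finset (Fin (k + 2))}
    {x y : G.V} (h : G.ElimDipole G' C x y) :
    G.omegaG = k ! / 2 * ((#C : ℚ) - 1) * ((k : ℚ) + 1 - #C) + G'.omegaG := by
  have hcount : (Fintype.card (ZMod (k + 2) ≃ Fin (k + 2)) : ℚ) = (k + 2)! := by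
    rw [Fintype.card_equiv (Fintype.equivOfCardEq (by simp [ZMod.card])), ZMod.card]
  simp only [omegaG, h.rho_eq, sum_add_distrib, ← sum_div, sum_sub_distrib, sum_const,
    Finset.card_univ, hcount, nsmul_eq_mul, sum_equiv_sum_ite_mem_iff_mem, factorial_succ]
  push_cast
  field_simp
  ring

theorem omegaG_elim_dipole_general {d : ℕ} (G G' : CG (d + 1)) (r : ℕ) (hr1 : 1 ≤ r) (hrd : r ≤ d)
    (C : Finset (Fin (d + 1))) (hC : C.card = r) (x y : G.V)
    (h : CG.ElimDipole G G' C x y) :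
    G.omegaG = ((d - 1).factorial : ℚ) / 2 * ((r : ℚ) - 1) * ((d : ℚ) - (r : ℚ)) + G'.omegaG
      ∧ G'.omegaG ≤ G.omegaG
      ∧ ((r = 1 ∨ r = d) → G.omegaG = G'.omegaG) := by
  obtain ⟨k, rfl⟩ : ∃ k, d = k + 1 := ⟨d - 1, by omega⟩
  have hstep : G.omegaG = (k.factorial : ℚ) / 2 * ((r : ℚ) - 1) * ((k : ℚ) + 1 - r) + G'.omegaG :=
    hC ▸ h.omegaG_eq
  have hr1' : (1 : ℚ) ≤ r := by exact_mod_cast hr1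
  have hrd' : (r : ℚ) ≤ k + 1 := by exact_mod_cast hrd
  have hgap : 0 ≤ (k.factorial : ℚ) / 2 * ((r : ℚ) - 1) * ((k : ℚ) + 1 - r) :=
    mul_nonneg (mul_nonneg (by positivity) (by linarith)) (by linarith)
  refine ⟨by simpa using hstep, by linarith, ?_⟩
  rintro (rfl | rfl) <;> simp [hstep]

/-- eliminating an `r`-dipole changes the Gurau degree by
`(d-1)!/2 · (r-1)(d-r)`; in particular it never increases it, and `1`- and
`d`-dipole eliminations leave it unchanged. -/
theorem omegaG_elim_dipole {d : ℕ} (G G' : CG (d + 1)) (hG : G.Connected)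
    (hG' : G'.Connected) (r : ℕ) (hr1 : 1 ≤ r) (hrd : r ≤ d)
    (C : Finset (Fin (d + 1))) (hC : C.card = r) (x y : G.V)
    (h : CG.ElimDipole G G' C x y) :
    G.omegaG = ((d - 1).factorial : ℚ) / 2 * ((r : ℚ) - 1) * ((d : ℚ) - (r : ℚ)) + G'.omegaG
      ∧ G'.omegaG ≤ G.omegaG
      ∧ ((r = 1 ∨ r = d) → G.omegaG = G'.omegaG) :=
  omegaG_elim_dipole_general G G' r hr1 hrd C hC x y h
end

section
/- Let Γ be a non-bipartite (d+1)-colored graph and ε = (ε₀,…,ε_d) a cyclic permutation of Δ_d. If there is an index i such that (a) every {ε_{i−1}, ε_i, ε_{i+1}}-residue of Γ is bipartite, and (b) every residue missing color ε_i is either bipartite or non-bipartite with integer regular genus with respect to the permutation induced by ε, then ρ_ε(Γ) is an integer. -/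
open Relation

/-!
`ρ_ε(Γ)` is an integer iff `Σ_j g_{ε_j ε_{j+1}} + (d + 1) p` is even. If every color of a cyclic
sequence `η_0, …, η_{m-1}` alternates along one 2-coloring of the vertices, then
`(-1) ^ (p + g_{ab})` is the sign of the permutation `v ↦ b (a v)` of the `p` white vertices,
and these permutations compose to the identity around the cycle, so
`Σ_k g_{η_k η_{k+1}} + m p` is even. Hypothesis (a) gives this for the triangle
`ε_{i-1}, ε_i, ε_{i+1}`, hypothesis (b) gives it, residue by residue, for the cycle
`ε_{i+1}, …, ε_{i-1}` that skips `ε_i`, and the two sums add up to the one for `ε` plus an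
even number.
-/

open Equiv Equiv.Perm

theorem card_quotient_eq_of_surjective {α β : Type*} {r : Setoid α} {s : Setoid β} (f : α → β)
    (hf : Function.Surjective f) (h : ∀ a b, r a b ↔ s (f a) (f b)) :
    Nat.card (Quotient r) = Nat.card (Quotient s) := by
  refine Nat.card_congr (Equiv.ofBijective (Quotient.map f fun a b => (h a b).1) ⟨?_, ?_⟩)
  · rintro ⟨a⟩ ⟨b⟩ hab
    exact Quotient.sound ((h a b).2 (Quotient.exact hab))
  · rintro ⟨b⟩
    obtain ⟨a, rfl⟩ := hf b
    exact ⟨⟦a⟧, rfl⟩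

theorem Nat.card_eq_sum_card_fiber {α β : Type*} [Finite α] [Fintype β] (φ : α → β) :
    Nat.card α = ∑ b, Nat.card {a // φ a = b} := by
  rw [← Nat.card_sigma, Nat.card_congr (Equiv.sigmaFiberEquiv φ)]

theorem Relation.eqvGen_subtype_iff {α : Type*} {r : α → α → Prop} {p : α → Prop}
    (hr : ∀ a b, r a b → (p a ↔ p b)) {x y : Subtype p} :
    EqvGen (fun a b : Subtype p => r a b) x y ↔ EqvGen r x y := by
  refine ⟨fun h => Setoid.eqvGen_le (s := (EqvGen.setoid r).comap Subtype.val)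
    (fun a b hab => EqvGen.rel _ _ hab) h, fun h => ?_⟩
  have hp : ∀ a b, EqvGen r a b → (p a ↔ p b) := fun a b hab =>
    Setoid.eqvGen_le (s := Setoid.ker p) (fun a b hab => propext (hr a b hab)) hab |>.to_iff
  suffices ∀ a b, EqvGen r a b → ∀ (ha : p a) (hb : p b),
      EqvGen (fun a b : Subtype p => r a b) ⟨a, ha⟩ ⟨b, hb⟩ from this _ _ h x.2 y.2
  intro a b hab
  induction hab with
  | rel a b hab => exact fun _ _ => EqvGen.rel _ _ hab
  | refl a => exact fun _ _ => EqvGen.refl _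
  | symm a b _ ih => exact fun ha hb => EqvGen.symm _ _ (ih hb ha)
  | trans a b c hab _ ih₁ ih₂ =>
    exact fun ha hc => EqvGen.trans _ _ _ (ih₁ ha ((hp a b hab).1 ha)) (ih₂ _ hc)

theorem Fin.exists_equiv_succAbove_eq {α : Type*} [Fintype α] {n : ℕ} (hα : Fintype.card α = n)
    {p : Fin (n + 1)} {f : α → Fin (n + 1)} (hf : Function.Injective f) (hp : ∀ a, f a ≠ p) :
    ∃ e : α ≃ Fin n, ∀ a, p.succAbove (e a) = f a := by
  choose g hg using fun a => Fin.exists_succAbove_eq (hp a)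
  have hinj : Function.Injective g := fun a b h => hf (by rw [← hg a, ← hg b, h])
  exact ⟨.ofBijective g ((Fintype.bijective_iff_injective_and_card g).2 ⟨hinj, by simp [hα]⟩), hg⟩

namespace ZMod

variable {d : ℕ} [NeZero d]

theorem sum_eq_sum_range_natCast {M : Type*} [AddCommMonoid M] (f : ZMod d → M) :
    ∑ j, f j = ∑ t ∈ Finset.range d, f t :=
  Finset.sum_nbij' val (fun t => t) (fun j _ => Finset.mem_range.2 j.val_lt)
    (fun _ _ => Finset.mem_univ _) (fun j _ => natCast_zmod_val j)
    (fun _ ht => val_cast_of_lt (Finset.mem_range.1 ht)) (fun j _ => by rw [natCast_zmod_val])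

theorem natCast_val_injective {m : ℕ} (h : d ≤ m) :
    Function.Injective fun j : ZMod d => (j.val : ZMod m) := fun a b hab => by
  have := congrArg val hab
  simp only [val_cast_of_lt (a.val_lt.trans_le h), val_cast_of_lt (b.val_lt.trans_le h)] at this
  exact val_injective d this

theorem add_one_add_natCast_val_ne (i : ZMod (d + 1)) (j : ZMod d) :
    i + 1 + (j.val : ZMod (d + 1)) ≠ i := by
  intro h
  have h0 : ((j.val + 1 : ℕ) : ZMod (d + 1)) = 0 := by
    push_cast
    linear_combination h
  have := congrArg val h0
  rw [val_cast_of_lt (by have := j.val_lt; omega), val_zero] at this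
  omega

theorem sum_cyclic_add_eq_sum_cyclic_erase {X M : Type*} [AddCommMonoid M]
    (F : X → X → M) (ε : ZMod (d + 1) → X) (i : ZMod (d + 1)) :
    ∑ j, F (ε j) (ε (j + 1)) + F (ε (i - 1)) (ε (i + 1)) =
      ∑ j : ZMod d, F (ε (i + 1 + (j.val : ℕ))) (ε (i + 1 + ((j + 1).val : ℕ))) +
        F (ε (i - 1)) (ε i) + F (ε i) (ε (i + 1)) := by
  obtain ⟨e, rfl⟩ := Nat.exists_eq_add_one_of_ne_zero (NeZero.ne d)
  let c : ℕ → X := fun t => ε (i + 1 + t)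
  have hzero : ((e + 2 : ℕ) : ZMod (e + 1 + 1)) = 0 := natCast_self _
  have hc : c e = ε (i - 1) ∧ c (e + 1) = ε i ∧ c (e + 2) = ε (i + 1) ∧ c 0 = ε (i + 1) := by
    push_cast at hzero
    refine ⟨congrArg ε ?_, congrArg ε ?_, congrArg ε ?_, by simp [c]⟩ <;>
      push_cast <;> linear_combination hzero
  have hcycle : ∑ j, F (ε j) (ε (j + 1)) = ∑ t ∈ Finset.range (e + 2), F (c t) (c (t + 1)) := by
    rw [← Fintype.sum_equiv (Equiv.addLeft (i + 1))
      (fun j => F (ε (i + 1 + j)) (ε (i + 1 + j + 1))) _ fun _ => rfl, sum_eq_sum_range_natCast]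
    simp only [c, Nat.cast_add, Nat.cast_one, add_assoc]
  have herase : ∑ j : ZMod (e + 1), F (ε (i + 1 + (j.val : ℕ))) (ε (i + 1 + ((j + 1).val : ℕ))) =
      ∑ t ∈ Finset.range e, F (c t) (c (t + 1)) + F (c e) (c 0) := by
    rw [sum_eq_sum_range_natCast, Finset.sum_range_succ]
    congr 1
    · refine Finset.sum_congr rfl fun t ht => ?_
      have ht : t + 1 < e + 1 := by simpa using ht
      rw [← Nat.cast_succ, val_cast_of_lt ht, val_cast_of_lt (by omega)]
    · rw [val_cast_of_lt (by omega), ← Nat.cast_succ, natCast_self, val_zero]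
  rw [hcycle, herase, Finset.sum_range_succ, Finset.sum_range_succ, hc.1, hc.2.1, hc.2.2.1,
    hc.2.2.2]
  abel

end ZMod

namespace Equiv.Perm

variable {α : Type*} [Fintype α] [DecidableEq α]

theorem card_quotient_sameCycle (σ : Perm α) :
    Nat.card (Quotient (SameCycle.setoid σ)) =
      Fintype.card (Function.fixedPoints σ) + σ.cycleFactorsFinset.card := by
  let F : α → Function.fixedPoints σ ⊕ σ.cycleFactorsFinset := fun x =>
    if hx : σ x = x then .inl ⟨x, hx⟩
    else .inr ⟨σ.cycleOf x, cycleOf_mem_cycleFactorsFinset_iff.2 (mem_support.2 hx)⟩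
  have hF : ∀ x y, σ.SameCycle x y ↔ F x = F y := by
    intro x y
    by_cases hx : σ x = x <;> by_cases hy : σ y = y <;>
      simp only [F, hx, hy, dite_true, dite_false, reduceCtorEq, iff_false, Sum.inl.injEq,
        Sum.inr.injEq, Subtype.mk_eq_mk]
    · exact ⟨fun h => Subtype.ext (h.eq_of_left hx), fun h => by cases h; rfl⟩
    · exact fun h => hy (h.apply_eq_self_iff.1 hx)
    · exact fun h => hx (h.apply_eq_self_iff.2 hy)
    · exact sameCycle_iff_cycleOf_eq_of_mem_support (mem_support.2 hx) (mem_support.2 hy)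
  let e : Quotient (SameCycle.setoid σ) ≃ Function.fixedPoints σ ⊕ σ.cycleFactorsFinset :=
    Equiv.ofBijective (Quotient.lift F fun x y h => (hF x y).1 h) ⟨?_, ?_⟩
  · rw [Nat.card_congr e, Nat.card_sum, Nat.card_eq_fintype_card, Nat.card_eq_fintype_card,
      Fintype.card_coe]
  · rintro ⟨x⟩ ⟨y⟩ hxy
    exact Quotient.sound ((hF x y).2 hxy)
  · rintro (⟨x, hx⟩ | ⟨c, hc⟩)
    · exact ⟨⟦x⟧, by simp [F, show σ x = x from hx]⟩
    · obtain ⟨x, hx⟩ := (mem_cycleFactorsFinset_iff.1 hc).1.nonempty_support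
      have hσx : σ x ≠ x := mem_support.1 (mem_cycleFactorsFinset_support_le hc hx)
      exact ⟨⟦x⟧, by simp [F, hσx, cycle_is_cycleOf hx hc]⟩

theorem sign_eq_neg_one_pow_card_add_card_quotient_sameCycle (σ : Perm α) :
    sign σ = (-1 : ℤˣ) ^ (Fintype.card α + Nat.card (Quotient (SameCycle.setoid σ))) := by
  have hfix : Fintype.card (Function.fixedPoints σ) + σ.support.card = Fintype.card α := by
    rw [card_fixedPoints, sum_cycleType]
    exact Nat.sub_add_cancel (Finset.card_le_univ _)
  have hcycles : Multiset.card σ.cycleType = σ.cycleFactorsFinset.card := by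
    rw [cycleType_def, Multiset.card_map]; rfl
  rw [sign_of_cycleType, sum_cycleType, card_quotient_sameCycle, hcycles, ← hfix,
    show ∀ a b c : ℕ, a + b + (a + c) = b + c + 2 * a by intros; ring]
  simp [pow_add, pow_mul]

end Equiv.Perm

namespace CG

section

variable {n : ℕ} (G : CG n)

def Flips (f : G.V → Bool) (a : Fin n) : Prop := ∀ v, f (G.inv a v) = !f v

/-- The `p` of the paper; the order of a colored graph is even (`two_mul_halfOrder`). -/
noncomputable def halfOrder : ℕ := Nat.card G.V / 2

noncomputable def cycleSum {m : ℕ} [NeZero m] (η : ZMod m → Fin n) : ℕ :=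
  ∑ k, G.g {η k, η (k + 1)}

theorem even_card [NeZero n] : Even (Nat.card G.V) := by
  let f : Function.End G.V := G.inv 0
  have hf : f ^ 2 ^ 1 = 1 := funext (G.invol 0)
  have : IsEmpty (Function.fixedPoints f) := ⟨fun v => G.noFix 0 v v.2⟩
  classical
  simpa [Nat.card_eq_fintype_card, Nat.even_iff, Nat.ModEq] using
    card_fixedPoints_modEq (p := 2) hf

theorem two_mul_halfOrder [NeZero n] : 2 * G.halfOrder = Nat.card G.V :=
  Nat.two_mul_div_two_of_even G.even_card

theorem exists_rho_eq_intCast_iff [NeZero n] (ε : ZMod n ≃ Fin n) :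
    (∃ k : ℤ, G.rho ε = k) ↔ Even (G.cycleSum ε + n * G.halfOrder) := by
  have hp : G.pQ = G.halfOrder := by
    rw [pQ, ← G.two_mul_halfOrder]
    push_cast; ring
  have hS : ∑ j, (G.g {ε j, ε (j + 1)} : ℚ) = G.cycleSum ε := by simp [cycleSum]
  rw [rho, hp, hS, ← Int.even_coe_nat]
  push_cast
  constructor
  · rintro ⟨k, hk⟩
    refine ⟨1 - k - G.halfOrder + n * G.halfOrder, ?_⟩
    qify
    linarith
  · rintro ⟨r, hr⟩
    refine ⟨1 - r - G.halfOrder + n * G.halfOrder, ?_⟩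
    qify at hr
    push_cast
    linarith

theorem cycleSum_three (a b c : Fin n) :
    G.cycleSum (m := 3) ![a, b, c] = G.g {a, b} + G.g {b, c} + G.g {c, a} :=
  (Fin.sum_univ_three _).trans rfl

theorem exists_flips_of_residueBipartite {B : Set (Fin n)} (h : ∀ v, G.ResidueBipartite B v) :
    ∃ f : G.V → Bool, ∀ a ∈ B, G.Flips f a := by
  let r := EqvGen.setoid (G.step B)
  choose f hf using fun q : Quotient r => h q.out
  refine ⟨fun v => f ⟦v⟧ v, fun a ha v => ?_⟩
  have hclass : (⟦G.inv a v⟧ : Quotient r) = ⟦v⟧ :=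
    Quotient.sound (EqvGen.symm _ _ (EqvGen.rel _ _ ⟨a, ha, rfl⟩))
  simp only [hclass]
  exact hf _ v (Quotient.exact (Quotient.out_eq (⟦v⟧ : Quotient r))) a ha

theorem halfOrder_eq_card_of_flips {f : G.V → Bool} {a : Fin n} (hf : G.Flips f a) :
    G.halfOrder = Nat.card {v // f v = true} := by
  let swap : {v // f v = false} ≃ {v // f v = true} :=
    { toFun := fun v => ⟨G.inv a v, by rw [hf, v.2]; rfl⟩
      invFun := fun v => ⟨G.inv a v, by rw [hf, v.2]; rfl⟩
      left_inv := fun v => Subtype.ext (G.invol a v)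
      right_inv := fun v => Subtype.ext (G.invol a v) }
  have hsplit : Nat.card {v // f v = true} + Nat.card {v // f v = false} = Nat.card G.V := by
    rw [← Nat.card_sum]
    exact Nat.card_congr ((Equiv.sumCongr (.refl _) (Equiv.subtypeEquivRight (by simp))).trans
      (Equiv.sumCompl fun v => f v = true))
  rw [halfOrder, ← hsplit, Nat.card_congr swap]
  omega

end

section

variable {n : ℕ} {G : CG n} {f : G.V → Bool} {a b c : Fin n}

def pairPerm (ha : G.Flips f a) (hb : G.Flips f b) : Perm {v // f v = true} where
  toFun v := ⟨G.inv b (G.inv a v), by rw [hb, ha, v.2]; rfl⟩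
  invFun v := ⟨G.inv a (G.inv b v), by rw [ha, hb, v.2]; rfl⟩
  left_inv _ := Subtype.ext (by simp only [G.invol])
  right_inv _ := Subtype.ext (by simp only [G.invol])

theorem pairPerm_mul_pairPerm (ha : G.Flips f a) (hb : G.Flips f b) (hc : G.Flips f c) :
    pairPerm ha hb * pairPerm hc ha = pairPerm hc hb :=
  Equiv.ext fun _ => Subtype.ext (congrArg (G.inv b) (G.invol a _))

theorem g_pair_eq_card_quotient_sameCycle (ha : G.Flips f a) (hb : G.Flips f b) :
    G.g {a, b} = Nat.card (Quotient (SameCycle.setoid (pairPerm ha hb))) := by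
  set σ := pairPerm ha hb
  have hab : a ∈ ({a, b} : Set (Fin n)) ∧ b ∈ ({a, b} : Set (Fin n)) := by simp
  let white : G.V → {v // f v = true} := fun v =>
    if hv : f v then ⟨v, hv⟩ else ⟨G.inv a v, by rw [ha]; simpa using hv⟩
  have hwhite : ∀ v, EqvGen (G.step {a, b}) v (white v) := by
    intro v
    by_cases hv : f v
    · simp only [white, hv, dite_true]; exact EqvGen.refl _
    · simp only [white, hv]; exact EqvGen.rel _ _ ⟨a, hab.1, rfl⟩
  have hσ : ∀ x, EqvGen (G.step {a, b}) x.1 (σ x).1 := fun x =>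
    EqvGen.trans _ _ _ (EqvGen.rel _ _ ⟨a, hab.1, rfl⟩) (EqvGen.rel _ _ ⟨b, hab.2, rfl⟩)
  have hcycle : ∀ x y, σ.SameCycle x y → EqvGen (G.step {a, b}) x.1 y.1 := by
    intro x y h
    obtain ⟨k, rfl⟩ := h.exists_nat_pow_eq
    clear h
    induction k with
    | zero => exact EqvGen.refl _
    | succ k ih => exact ih.trans _ _ _ (by rw [pow_succ', Perm.mul_apply]; exact hσ _)
  have hedge : ∀ u, ∀ c ∈ ({a, b} : Set (Fin n)), σ.SameCycle (white u) (white (G.inv c u)) := by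
    rintro u c (rfl | rfl) <;> cases hu : f u
    · rw [show white (G.inv c u) = white u by simp [white, hu, ha u]]
    · rw [show white (G.inv c u) = white u by simp [white, hu, ha u, G.invol]]
    · rw [show white (G.inv c u) = σ (white u) by
        ext; simp [white, hu, hb u, σ, pairPerm, G.invol]]
      exact sameCycle_apply_right.2 (.refl _ _)
    · rw [show white u = σ (white (G.inv c u)) by
        ext; simp [white, hu, hb u, σ, pairPerm, G.invol]]
      exact sameCycle_apply_left.2 (.refl _ _)
  refine card_quotient_eq_of_surjective white (fun x => ⟨x, dif_pos x.2⟩) fun u w => ⟨?_, ?_⟩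
  · refine fun h => Setoid.eqvGen_le (s := (SameCycle.setoid σ).comap white) ?_ h
    rintro u _ ⟨c, hc, rfl⟩
    exact hedge u c hc
  · intro h
    exact ((hwhite u).trans _ _ _ (hcycle _ _ h)).trans _ _ _ ((hwhite w).symm _ _)

theorem sign_pairPerm [DecidableEq G.V] (ha : G.Flips f a) (hb : G.Flips f b) :
    sign (pairPerm ha hb) = (-1 : ℤˣ) ^ (G.halfOrder + G.g {a, b}) := by
  rw [sign_eq_neg_one_pow_card_add_card_quotient_sameCycle,
    g_pair_eq_card_quotient_sameCycle ha hb, G.halfOrder_eq_card_of_flips ha,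
    Nat.card_eq_fintype_card (α := {v // f v = true})]

theorem even_cycleSum_add_of_flips {m : ℕ} [NeZero m] {η : ZMod m → Fin n}
    (hf : ∀ k, G.Flips f (η k)) : Even (G.cycleSum η + m * G.halfOrder) := by
  classical
  -- `pairPerm a b = pairPerm η₀ b * (pairPerm η₀ a)⁻¹`, so the product of signs is a square.
  let s : ZMod m → ℤˣ := fun k => sign (pairPerm (hf 0) (hf k))
  have hsign : ∀ k, (-1 : ℤˣ) ^ (G.halfOrder + G.g {η k, η (k + 1)}) = s k * s (k + 1) := by
    intro k
    have h := congrArg sign (pairPerm_mul_pairPerm (hf k) (hf (k + 1)) (hf 0))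
    rw [map_mul] at h
    change _ = _ * sign _
    rw [← sign_pairPerm (hf k) (hf (k + 1)), ← h, mul_left_comm, Int.units_mul_self, mul_one]
  have hprod : ∏ k, (-1 : ℤˣ) ^ (G.halfOrder + G.g {η k, η (k + 1)}) = 1 := by
    rw [Finset.prod_congr rfl fun k _ => hsign k, Finset.prod_mul_distrib,
      Fintype.prod_equiv (Equiv.addRight 1) (fun k => s (k + 1)) s fun _ => rfl,
      Int.units_mul_self]
  rw [Finset.prod_pow_eq_pow_sum, neg_one_pow_eq_one_iff_even (by decide),
    Finset.sum_add_distrib, Finset.sum_const, Finset.card_univ, ZMod.card, smul_eq_mul] at hprod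
  rw [cycleSum, add_comm]
  exact hprod

end

section

variable {n : ℕ} (G : CG (n + 1)) (i : Fin (n + 1))

noncomputable instance : Fintype (Quotient (G.resSetoid i)) := Fintype.ofFinite _

theorem step_ne_of_step_image_succAbove {B : Set (Fin n)} {a b : G.V}
    (h : G.step (i.succAbove '' B) a b) : G.step {j | j ≠ i} a b := by
  obtain ⟨_, ⟨k, -, rfl⟩, hab⟩ := h
  exact ⟨_, Fin.succAbove_ne i k, hab⟩

theorem hatRes_step_eq (v : G.V) (B : Set (Fin n)) :
    (G.hatRes i v).step B = fun x y => G.step (i.succAbove '' B) x.1 y.1 := by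
  ext x y
  constructor
  · rintro ⟨k, hk, rfl⟩
    exact ⟨i.succAbove k, ⟨k, hk, rfl⟩, rfl⟩
  · rintro ⟨_, ⟨k, hk, rfl⟩, hxy⟩
    exact ⟨k, hk, Subtype.ext hxy⟩

theorem card_eq_sum_card_hatRes :
    Nat.card G.V = ∑ q : Quotient (G.resSetoid i), Nat.card (G.hatRes i q.out).V := by
  rw [Nat.card_eq_sum_card_fiber (Quotient.mk (G.resSetoid i))]
  refine Finset.sum_congr rfl fun q _ => Nat.card_congr (Equiv.subtypeEquivRight fun w => ?_)
  conv_lhs => rw [← Quotient.out_eq q]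
  exact ⟨fun h => Quotient.exact h.symm, fun h => (Quotient.sound h).symm⟩

theorem g_image_succAbove (B : Set (Fin n)) :
    G.g (i.succAbove '' B) = ∑ q : Quotient (G.resSetoid i), (G.hatRes i q.out).g B := by
  let C := EqvGen.setoid (G.step (i.succAbove '' B))
  let φ : Quotient C → Quotient (G.resSetoid i) :=
    Quotient.map id fun a b => EqvGen.mono (fun _ _ => G.step_ne_of_step_image_succAbove i) a b
  rw [g, Nat.card_eq_sum_card_fiber φ]
  refine Finset.sum_congr rfl fun q _ => ?_
  have hsub : ∀ x y : (G.hatRes i q.out).V, EqvGen ((G.hatRes i q.out).step B) x y ↔ C x.1 y.1 := by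
    intro x y
    rw [hatRes_step_eq]
    refine Relation.eqvGen_subtype_iff fun a b hab => ?_
    have hab' : EqvGen (G.step {j | j ≠ i}) a b :=
      EqvGen.rel _ _ (G.step_ne_of_step_image_succAbove i hab)
    exact ⟨fun ha => ha.trans _ _ _ hab', fun hb => hb.trans _ _ _ (hab'.symm _ _)⟩
  have hclass : ∀ w : (G.hatRes i q.out).V, φ ⟦w.1⟧ = q := fun w =>
    (Quotient.sound w.2).symm.trans q.out_eq
  refine (Nat.card_congr (Equiv.ofBijective
    (Quotient.lift (fun w => (⟨⟦w.1⟧, hclass w⟩ : {x : Quotient C // φ x = q})) fun x y h =>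
      Subtype.ext (Quotient.sound ((hsub x y).1 h))) ⟨?_, ?_⟩)).symm
  · rintro ⟨x⟩ ⟨y⟩ h
    exact Quotient.sound ((hsub x y).2 (Quotient.exact (congrArg Subtype.val h)))
  · rintro ⟨x, hx⟩
    have hmem : EqvGen (G.step {j | j ≠ i}) q.out x.out :=
      Quotient.exact (q.out_eq.trans (hx.symm.trans (congrArg φ x.out_eq).symm))
    exact ⟨⟦⟨x.out, hmem⟩⟧, Subtype.ext x.out_eq⟩

theorem cycleSum_comp_succAbove {m : ℕ} [NeZero m] (η : ZMod m → Fin n) :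
    G.cycleSum (i.succAbove ∘ η) =
      ∑ q : Quotient (G.resSetoid i), (G.hatRes i q.out).cycleSum η := by
  simp only [cycleSum, Function.comp_apply, ← Set.image_pair, g_image_succAbove]
  exact Finset.sum_comm

theorem halfOrder_eq_sum_halfOrder_hatRes [NeZero n] :
    G.halfOrder = ∑ q : Quotient (G.resSetoid i), (G.hatRes i q.out).halfOrder := by
  have h := G.card_eq_sum_card_hatRes i
  simp only [← two_mul_halfOrder, ← Finset.mul_sum] at h
  omega

theorem even_cycleSum_comp_succAbove_add [NeZero n] {m : ℕ} [NeZero m] (η : ZMod m → Fin n)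
    (h : ∀ v, Even ((G.hatRes i v).cycleSum η + m * (G.hatRes i v).halfOrder)) :
    Even (G.cycleSum (i.succAbove ∘ η) + m * G.halfOrder) := by
  rw [cycleSum_comp_succAbove, halfOrder_eq_sum_halfOrder_hatRes, Finset.mul_sum,
    ← Finset.sum_add_distrib]
  exact Finset.even_sum _ fun q _ => h q.out

end

end CG

theorem rho_integer_criterion_general {d : ℕ} [NeZero d] (G : CG (d + 1))
    (ε : ZMod (d + 1) ≃ Fin (d + 1)) (i : ZMod (d + 1))
    (ha : ∀ v, G.ResidueBipartite {ε (i - 1), ε i, ε (i + 1)} v)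
    (hb : ∀ v, (G.hatRes (ε i) v).Bipartite ∨
      (¬ (G.hatRes (ε i) v).Bipartite ∧
        ∀ ε' : ZMod d ≃ Fin d,
          (∀ j : ZMod d, (ε i).succAbove (ε' j) = ε (i + 1 + ((j.val : ℕ) : ZMod (d + 1)))) →
          ∃ k : ℤ, (G.hatRes (ε i) v).rho ε' = (k : ℚ))) :
    ∃ k : ℤ, G.rho ε = (k : ℚ) := by
  obtain ⟨f, hf⟩ := G.exists_flips_of_residueBipartite ha
  have htriangle : Even (G.cycleSum ![ε (i - 1), ε i, ε (i + 1)] + 3 * G.halfOrder) :=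
    CG.even_cycleSum_add_of_flips (f := f) fun k => by fin_cases k <;> exact hf _ (by simp)
  obtain ⟨ε', hε'⟩ := Fin.exists_equiv_succAbove_eq (ZMod.card d)
    (f := fun j : ZMod d => ε (i + 1 + (j.val : ℕ)))
    (ε.injective.comp ((add_right_injective _).comp (ZMod.natCast_val_injective d.le_succ)))
    fun j h => ZMod.add_one_add_natCast_val_ne i j (ε.injective h)
  have hresidues : Even (G.cycleSum ((ε i).succAbove ∘ ε') + d * G.halfOrder) :=
    G.even_cycleSum_comp_succAbove_add (ε i) ε' fun v => (hb v).elim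
      (fun ⟨_, hg⟩ => CG.even_cycleSum_add_of_flips fun _ w => hg _ w)
      fun h => (CG.exists_rho_eq_intCast_iff _ ε').1 (h.2 ε' hε')
  have hcut := ZMod.sum_cyclic_add_eq_sum_cyclic_erase (fun a b => G.g {a, b}) ε i
  simp only [← hε'] at hcut
  rw [CG.cycleSum_three, Set.pair_comm (ε (i + 1))] at htriangle
  rw [CG.exists_rho_eq_intCast_iff]
  simp only [CG.cycleSum, Function.comp_apply] at hresidues ⊢
  rw [Nat.even_iff] at *
  rw [add_mul, one_mul]
  generalize d * G.halfOrder = D at *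
  omega

/-- Chiavacci–Pareschi: if `Γ` is non-bipartite and, for some index `i`,
(a) every `{ε_{i-1}, ε_i, ε_{i+1}}`-residue is bipartite, and (b) every residue missing
the color `ε_i` is bipartite or non-bipartite with integer regular genus with respect
to the permutation induced by `ε`, then `ρ_ε(Γ)` is an integer. -/
theorem rho_integer_criterion {d : ℕ} [NeZero d] (G : CG (d + 1)) (hG : G.Connected)
    (hnb : ¬ G.Bipartite) (ε : ZMod (d + 1) ≃ Fin (d + 1)) (i : ZMod (d + 1))
    (ha : ∀ v, G.ResidueBipartite {ε (i - 1), ε i, ε (i + 1)} v)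
    (hb : ∀ v, (G.hatRes (ε i) v).Bipartite ∨
      (¬ (G.hatRes (ε i) v).Bipartite ∧
        ∀ ε' : ZMod d ≃ Fin d,
          (∀ j : ZMod d, (ε i).succAbove (ε' j) = ε (i + 1 + ((j.val : ℕ) : ZMod (d + 1)))) →
          ∃ k : ℤ, (G.hatRes (ε i) v).rho ε' = (k : ℚ))) :
    ∃ k : ℤ, G.rho ε = (k : ℚ) :=
  rho_integer_criterion_general G ε i ha hb
end
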